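/- arXiv:2502.04228 — 17 statements merged into one kernel-verified Lean document; each statement's English description precedes it below -/
import Mathlib

section
/- A metric space (X,d) is an ultrametric space (i.e., satisfies d(x,y) ≤ max{d(x,z), d(z,y)} for all x,y,z ∈ X) if and only if for every integer n ≥ 3 and every injective map x : ZMod n → X, the maximum of the cycle-edge distances is attained at least twice: there exist i ≠ j in ZMod n with d(x i, x (i+1)) = d(x j, x (j+1)) = max_{k ∈ ZMod n} d(x k, x (k+1)). -/
/-- A metric space is ultrametric iff in every cycle of points the maximal
edge distance is attained at least twice. -/
theorem cycle_characterization_of_ultrametric {X : Type*} [MetricSpace X] :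
    (∀ x y z : X, dist x y ≤ max (dist x z) (dist z y)) ↔
    (∀ n : ℕ, 3 ≤ n → ∀ x : ZMod n → X, Function.Injective x →
      ∃ i j : ZMod n, i ≠ j ∧
        dist (x i) (x (i + 1)) = (⨆ k : ZMod n, dist (x k) (x (k + 1))) ∧
        dist (x j) (x (j + 1)) = (⨆ k : ZMod n, dist (x k) (x (k + 1)))) := by
  constructor
  · intro H n hn x hx
    haveI : NeZero n := ⟨by omega⟩
    set f : ZMod n → ℝ := fun k => dist (x k) (x (k + 1)) with hf
    have hbdd : BddAbove (Set.range f) := (Set.finite_range f).bddAbove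
    obtain ⟨i0, hi0⟩ := Finite.exists_max f
    have hS : (⨆ k : ZMod n, f k) = f i0 :=
      le_antisymm (ciSup_le hi0) (le_ciSup hbdd i0)
    have hcast : ∀ k : ℕ, 0 < k → k < n → (k : ZMod n) ≠ 0 := by
      intro k hk1 hk2 h
      rw [ZMod.natCast_eq_zero_iff] at h
      exact absurd (Nat.le_of_dvd hk1 h) (by omega)
    have hM0 : 0 < f i0 := by
      apply dist_pos.2
      intro h
      have := hx h
      have : (1 : ZMod n) = 0 := by
        have := congrArg (· - i0) this
        simpa using this.symm
      exact hcast 1 (by omega) (by omega) (by simpa using this)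
    by_contra hc
    push_neg at hc
    simp only [← hf, hS] at hc
    -- uniqueness: every other edge is strictly smaller
    have huniq : ∀ j : ZMod n, j ≠ i0 → f j < f i0 := by
      intro j hj
      exact (hi0 j).lt_of_ne (hc i0 j hj.symm rfl)
    -- path lemma
    have path : ∀ m : ℕ, ∀ i : ZMod n,
        (∀ k : ℕ, k < m → dist (x (i + k)) (x (i + k + 1)) < f i0) →
        dist (x i) (x (i + m)) < f i0 := by
      intro m
      induction m with
      | zero => intro i _; simpa using hM0
      | succ m ih =>
        intro i hcond
        have h1 : dist (x i) (x (i + m)) < f i0 :=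
          ih i fun k hk => hcond k (by omega)
        have h2 : dist (x (i + m)) (x (i + m + 1)) < f i0 :=
          hcond m (by omega)
        have h3 := H (x i) (x (i + m + 1)) (x (i + m))
        have hrw : (((m : ℕ) + 1 : ℕ) : ZMod n) = (m : ZMod n) + 1 := by push_cast; ring
        rw [hrw, ← add_assoc]
        exact lt_of_le_of_lt h3 (max_lt h1 h2)
    have hkey : dist (x (i0 + 1)) (x (i0 + 1 + ((n - 1 : ℕ) : ZMod n))) < f i0 := by
      apply path
      intro k hk
      apply huniq
      intro h
      have : ((k + 1 : ℕ) : ZMod n) = 0 := by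
        have := congrArg (· - i0) h
        push_cast at this ⊢
        simp only [sub_self] at this
        linear_combination this
      exact hcast (k + 1) (by omega) (by omega) this
    have hn1 : ((n - 1 : ℕ) : ZMod n) = -1 := by
      rw [Nat.cast_sub (by omega), ZMod.natCast_self]
      ring
    rw [hn1] at hkey
    have : i0 + 1 + -1 = i0 := by ring
    rw [this, dist_comm] at hkey
    exact absurd hkey (lt_irrefl _)
  · intro H x y z
    by_contra hlt
    push_neg at hlt
    have hxz : dist x z < dist x y := lt_of_le_of_lt (le_max_left _ _) hlt
    have hzy : dist z y < dist x y := lt_of_le_of_lt (le_max_right _ _) hlt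
    have hxy : x ≠ y := by
      intro h; rw [h, dist_self] at hlt
      exact absurd hlt (not_lt.2 (le_max_of_le_left dist_nonneg))
    have hxz' : x ≠ z := by
      intro h; rw [← h, dist_self] at hxz
      rw [← h] at hzy
      exact absurd hzy (lt_irrefl _)
    have hyz : y ≠ z := by
      intro h; rw [← h, dist_self] at hzy
      rw [← h, dist_comm] at hxz
      exact absurd hxz (lt_irrefl _)
    set a : ZMod 3 → X := fun i => if i = 0 then x else if i = 1 then y else z with ha
    have ha0 : a 0 = x := rfl
    have ha1 : a 1 = y := rfl
    have ha2 : a 2 = z := rfl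
    have hinj : Function.Injective a := by
      intro i j hij
      have h3 : ∀ i : ZMod 3, i = 0 ∨ i = 1 ∨ i = 2 := by decide
      rcases h3 i with hi | hi | hi <;> rcases h3 j with hj | hj | hj <;>
        subst hi <;> subst hj <;>
        simp_all [ha0, ha1, ha2] <;>
        first
          | rfl
          | exact absurd hij hxy | exact absurd hij.symm hxy
          | exact absurd hij hxz' | exact absurd hij.symm hxz'
          | exact absurd hij hyz | exact absurd hij.symm hyz
    obtain ⟨i, j, hij, hi, hj⟩ := H 3 le_rfl a hinj
    set g : ZMod 3 → ℝ := fun k => dist (a k) (a (k + 1)) with hg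
    have hbdd : BddAbove (Set.range g) := (Set.finite_range g).bddAbove
    have hS0 : dist x y ≤ ⨆ k : ZMod 3, g k := by
      have := le_ciSup hbdd (0 : ZMod 3)
      simpa [hg, ha0, ha1] using this
    have hfi : ∀ k : ZMod 3, k ≠ 0 → g k < ⨆ k : ZMod 3, g k := by
      intro k hk
      have h3 : k = 1 ∨ k = 2 := by
        have : ∀ i : ZMod 3, i = 0 ∨ i = 1 ∨ i = 2 := by decide
        rcases this k with h | h | h
        · exact absurd h hk
        · exact Or.inl h
        · exact Or.inr h
      rcases h3 with h | h <;> subst h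
      · calc g 1 = dist z y := by rw [hg]; exact dist_comm y z
          _ < dist x y := hzy
          _ ≤ _ := hS0
      · calc g 2 = dist x z := by
              have : (2 : ZMod 3) + 1 = 0 := by decide
              rw [hg]; simp only [this, ha2, ha0]; exact dist_comm z x
          _ < dist x y := hxz
          _ ≤ _ := hS0
    have hi0' : i = 0 := by
      by_contra h
      rw [show dist (a i) (a (i+1)) = g i from rfl] at hi
      exact absurd hi (ne_of_lt (hfi i h))
    have hj0' : j = 0 := by
      by_contra h
      rw [show dist (a j) (a (j+1)) = g j from rfl] at hj
      exact absurd hj (ne_of_lt (hfi j h))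
    exact hij (hi0'.trans hj0'.symm)
end

section
/- Let (X,d) be a nonempty ultrametric space and let 𝐁̄ = {B : Set X | ∃ c ∈ X, ∃ r ≥ 0, B = closedBall c r} be the family of all closed balls of X (including singletons, which are closed balls of radius 0). The following are equivalent: (1) for every sequence (Bₙ) of closed balls with B_{n+1} ⊊ Bₙ for every n ∈ ℕ, the intersection ⋂ₙ Bₙ is nonempty (X is spherically complete); (2) for every nonempty subfamily A ⊆ 𝐁̄ that is a chain with respect to set inclusion, the intersection ⋂_{B ∈ A} B is nonempty; (3) a subfamily A ⊆ 𝐁̄ is a maximal chain of (𝐁̄, ⊆) if and only if there exists a point a ∈ X such that A = {B ∈ 𝐁̄ : a ∈ B}. -/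
open Metric

/-- The family of all closed balls of a metric space (including singletons,
which are closed balls of radius `0`). -/
def closedBallean (X : Type*) [MetricSpace X] : Set (Set X) :=
  {B | ∃ c : X, ∃ r : ℝ, 0 ≤ r ∧ B = Metric.closedBall c r}

section Aux

variable {X : Type*} [MetricSpace X]

theorem um_recenter (hu : ∀ x y z : X, dist x y ≤ max (dist x z) (dist z y))
    {c x : X} {r : ℝ} (hx : x ∈ closedBall c r) :
    closedBall c r = closedBall x r := by
  rw [mem_closedBall] at hx
  ext y
  simp only [mem_closedBall]
  constructor <;> intro hy
  · calc dist y x ≤ max (dist y c) (dist c x) := hu y x c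
      _ ≤ r := max_le hy (by rwa [dist_comm])
  · calc dist y c ≤ max (dist y x) (dist x c) := hu y c x
      _ ≤ r := max_le hy hx

theorem um_comparable (hu : ∀ x y z : X, dist x y ≤ max (dist x z) (dist z y))
    {a c₁ c₂ : X} {r₁ r₂ : ℝ}
    (h1 : a ∈ closedBall c₁ r₁) (h2 : a ∈ closedBall c₂ r₂) :
    closedBall c₁ r₁ ⊆ closedBall c₂ r₂ ∨ closedBall c₂ r₂ ⊆ closedBall c₁ r₁ := by
  rw [um_recenter hu h1, um_recenter hu h2]
  rcases le_total r₁ r₂ with h | h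
  · exact Or.inl (closedBall_subset_closedBall h)
  · exact Or.inr (closedBall_subset_closedBall h)

theorem um_point_chain (hu : ∀ x y z : X, dist x y ≤ max (dist x z) (dist z y)) (a : X) :
    IsChain (· ⊆ ·) {B ∈ closedBallean X | a ∈ B} := by
  rintro B₁ ⟨⟨c₁, r₁, hr₁, rfl⟩, ha₁⟩ B₂ ⟨⟨c₂, r₂, hr₂, rfl⟩, ha₂⟩ hne
  exact um_comparable hu ha₁ ha₂

theorem um_seq_to_chain (hu : ∀ x y z : X, dist x y ≤ max (dist x z) (dist z y))
    (hseq : ∀ B : ℕ → Set X, (∀ n, B n ∈ closedBallean X) → (∀ n, B (n + 1) ⊂ B n) →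
      (⋂ n, B n).Nonempty)
    (A : Set (Set X)) (hA : A ⊆ closedBallean X) (hne : A.Nonempty)
    (hchain : IsChain (· ⊆ ·) A) : (⋂ B ∈ A, B).Nonempty := by
  by_cases hmin : ∃ B ∈ A, ∀ B' ∈ A, ¬ B' ⊂ B
  · obtain ⟨B, hB, hBmin⟩ := hmin
    have hleast : ∀ B' ∈ A, B ⊆ B' := by
      intro B' hB'
      rcases eq_or_ne B' B with h | h
      · exact h ▸ subset_rfl
      · rcases hchain hB' hB h with h' | h'
        · exact absurd ⟨h', fun hh => h (subset_antisymm h' hh)⟩ (hBmin B' hB')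
        · exact h'
    obtain ⟨c, r, hr, rfl⟩ := hA hB
    exact ⟨c, Set.mem_iInter₂.2 fun B' hB' => hleast _ hB' (mem_closedBall_self hr)⟩
  · push_neg at hmin
    set S : Set ℝ := {r : ℝ | 0 ≤ r ∧ ∃ c : X, closedBall c r ∈ A} with hS
    have hSne : S.Nonempty := by
      obtain ⟨B, hB⟩ := hne
      obtain ⟨c, r, hr, rfl⟩ := hA hB
      exact ⟨r, hr, c, hB⟩
    have hSbdd : BddBelow S := ⟨0, fun r hr => hr.1⟩
    set ρ := sInf S with hρ
    have step : ∀ B ∈ A, ∀ ε : ℝ, 0 < ε →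
        ∃ B', B' ∈ A ∧ B' ⊂ B ∧ ∃ c r, 0 ≤ r ∧ r < ρ + ε ∧ B' = closedBall c r := by
      intro B hB ε hε
      obtain ⟨rC, hrCS, hrClt⟩ := exists_lt_of_csInf_lt hSne (by linarith : sInf S < ρ + ε)
      obtain ⟨hrC0, cC, hC⟩ := hrCS
      by_cases hCB : closedBall cC rC ⊂ B
      · exact ⟨closedBall cC rC, hC, hCB, cC, rC, hrC0, hrClt, rfl⟩
      · have hBC : B ⊆ closedBall cC rC := by
          rcases eq_or_ne (closedBall cC rC) B with h | h
          · exact h ▸ subset_rfl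
          · rcases hchain hC hB h with h' | h'
            · exact absurd ⟨h', fun hh => h (subset_antisymm h' hh)⟩ hCB
            · exact h'
        obtain ⟨B', hB'A, hB'B⟩ := hmin B hB
        obtain ⟨c', r', hr'0, hB'eq⟩ := hA hB'A
        have hx : c' ∈ B' := hB'eq ▸ mem_closedBall_self hr'0
        have hxC : c' ∈ closedBall cC rC := hBC (hB'B.1 hx)
        have hCeq : closedBall cC rC = closedBall c' rC := um_recenter hu hxC
        have hr'lt : r' < rC := by
          by_contra h
          push_neg at h
          have hsub : closedBall cC rC ⊆ B' := by
            rw [hCeq, hB'eq]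
            exact closedBall_subset_closedBall h
          exact hB'B.2 (hBC.trans hsub)
        exact ⟨B', hB'A, hB'B, c', r', hr'0, hr'lt.trans hrClt, hB'eq⟩
    obtain ⟨B₀, hB₀⟩ := hne
    have key : ∀ (p : {B : Set X // B ∈ A}) (n : ℕ), ∃ q : {B : Set X // B ∈ A},
        q.1 ⊂ p.1 ∧ ∃ c r, 0 ≤ r ∧ r < ρ + 1 / ((n : ℝ) + 1) ∧ q.1 = closedBall c r := by
      intro p n
      obtain ⟨B', hB'A, h1, h2⟩ := step p.1 p.2 (1 / ((n : ℝ) + 1)) (by positivity)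
      exact ⟨⟨B', hB'A⟩, h1, h2⟩
    let f : ℕ → {B : Set X // B ∈ A} :=
      fun n => Nat.rec ⟨B₀, hB₀⟩ (fun n p => (key p n).choose) n
    have hfdec : ∀ n, (f (n + 1)).1 ⊂ (f n).1 := fun n => (key (f n) n).choose_spec.1
    have hfrad : ∀ n : ℕ, ∃ c r, 0 ≤ r ∧ r < ρ + 1 / ((n : ℝ) + 1) ∧
        (f (n + 1)).1 = closedBall c r := fun n => (key (f n) n).choose_spec.2
    obtain ⟨x, hx⟩ := hseq (fun n => (f n).1) (fun n => hA (f n).2) hfdec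
    simp only [Set.mem_iInter] at hx
    refine ⟨x, Set.mem_iInter₂.2 fun B hB => ?_⟩
    by_cases hex : ∃ n, (f n).1 ⊆ B
    · obtain ⟨n, hn⟩ := hex
      exact hn (hx n)
    · push_neg at hex
      have hsub : ∀ n, B ⊆ (f n).1 := by
        intro n
        rcases eq_or_ne B (f n).1 with h | h
        · exact h ▸ subset_rfl
        · rcases hchain hB (f n).2 h with h' | h'
          · exact h'
          · exact absurd h' (hex n)
      obtain ⟨c, r, hr0, rfl⟩ := hA hB
      have hρr : ρ ≤ r := csInf_le hSbdd ⟨hr0, c, hB⟩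
      have hd : dist x c ≤ ρ := by
        refine le_of_forall_pos_le_add fun ε hε => ?_
        obtain ⟨n, hn⟩ := exists_nat_one_div_lt hε
        obtain ⟨cn, rn, hrn0, hrnlt, heq⟩ := hfrad n
        have hxn : x ∈ (f (n + 1)).1 := hx (n + 1)
        have hcn : c ∈ (f (n + 1)).1 := hsub (n + 1) (mem_closedBall_self hr0)
        rw [heq, mem_closedBall] at hxn hcn
        calc dist x c ≤ max (dist x cn) (dist cn c) := hu x c cn
          _ ≤ rn := max_le hxn (by rwa [dist_comm])
          _ ≤ ρ + ε := le_of_lt (hrnlt.trans (by linarith))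
      exact mem_closedBall.2 (hd.trans hρr)

end Aux

/-- For a nonempty ultrametric space, spherical completeness, the nonempty
intersection of every nonempty chain of closed balls, and the description of
maximal chains of closed balls as the families of closed balls containing a
fixed point, are all equivalent. -/
theorem spherically_complete_iff_chains {X : Type*} [MetricSpace X] [Nonempty X]
    (hu : ∀ x y z : X, dist x y ≤ max (dist x z) (dist z y)) :
    ((∀ B : ℕ → Set X, (∀ n, B n ∈ closedBallean X) → (∀ n, B (n + 1) ⊂ B n) →
        (⋂ n, B n).Nonempty) ↔
      (∀ A : Set (Set X), A ⊆ closedBallean X → A.Nonempty → IsChain (· ⊆ ·) A →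
        (⋂ B ∈ A, B).Nonempty)) ∧
    ((∀ A : Set (Set X), A ⊆ closedBallean X → A.Nonempty → IsChain (· ⊆ ·) A →
        (⋂ B ∈ A, B).Nonempty) ↔
      (∀ A : Set (Set X), A ⊆ closedBallean X →
        ((IsChain (· ⊆ ·) A ∧
            ∀ A' : Set (Set X), A' ⊆ closedBallean X → IsChain (· ⊆ ·) A' →
              A ⊆ A' → A = A') ↔
          ∃ a : X, A = {B ∈ closedBallean X | a ∈ B}))) := by
  constructor
  · constructor
    · exact fun hseq A hA hne hchain => um_seq_to_chain hu hseq A hA hne hchain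
    · -- chain → seq
      intro hch B hBmem hBdec
      have hmono : ∀ m n, m ≤ n → B n ⊆ B m := by
        intro m n h
        induction h with
        | refl => exact subset_rfl
        | step h ih => exact (hBdec _).1.trans ih
      have hAchain : IsChain (· ⊆ ·) (Set.range B) := by
        rintro _ ⟨m, rfl⟩ _ ⟨n, rfl⟩ hne
        rcases le_total m n with h | h
        · exact Or.inr (hmono m n h)
        · exact Or.inl (hmono n m h)
      obtain ⟨x, hx⟩ := hch (Set.range B) (by rintro _ ⟨n, rfl⟩; exact hBmem n)
        ⟨B 0, 0, rfl⟩ hAchain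
      exact ⟨x, Set.mem_iInter.2 fun n => Set.mem_iInter₂.1 hx (B n) ⟨n, rfl⟩⟩
  · constructor
    · -- chain → maxchain characterization
      intro hch A hA
      constructor
      · rintro ⟨hchain, hmax⟩
        have hne : A.Nonempty := by
          by_contra h
          rw [Set.not_nonempty_iff_eq_empty] at h
          subst h
          obtain ⟨x⟩ := ‹Nonempty X›
          have h1 : ({closedBall x 0} : Set (Set X)) ⊆ closedBallean X := by
            intro B hB
            rw [Set.mem_singleton_iff] at hB
            exact ⟨x, 0, le_refl 0, hB⟩
          have h2 : IsChain (· ⊆ ·) ({closedBall x 0} : Set (Set X)) :=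
            Set.Subsingleton.isChain (Set.subsingleton_singleton)
          have := hmax _ h1 h2 (Set.empty_subset _)
          exact (Set.singleton_ne_empty _) this.symm
        obtain ⟨a, ha⟩ := hch A hA hne hchain
        have haB : ∀ B ∈ A, a ∈ B := fun B hB => Set.mem_iInter₂.1 ha B hB
        refine ⟨a, hmax _ (Set.sep_subset _ _) (um_point_chain hu a)
          (fun B hB => ⟨hA hB, haB B hB⟩)⟩
      · rintro ⟨a, rfl⟩
        refine ⟨um_point_chain hu a, ?_⟩
        intro A' hA' hA'chain hsubA'
        refine subset_antisymm hsubA' fun B hB => ?_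
        have hsingmem : ({a} : Set X) ∈ {B ∈ closedBallean X | a ∈ B} :=
          ⟨⟨a, 0, le_refl 0, (closedBall_zero (x := a)).symm⟩, rfl⟩
        have hsing' : ({a} : Set X) ∈ A' := hsubA' hsingmem
        rcases eq_or_ne B {a} with h | h
        · exact h ▸ hsingmem
        · rcases hA'chain hB hsing' h with h' | h'
          · obtain ⟨c, r, hr, rfl⟩ := hA' hB
            have hc : c ∈ ({a} : Set X) := h' (mem_closedBall_self hr)
            have : closedBall c r = {a} := by
              refine subset_antisymm h' ?_
              rintro y rfl
              rw [Set.mem_singleton_iff] at hc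
              exact hc ▸ mem_closedBall_self hr
            exact absurd this h
          · exact ⟨hA' hB, h' rfl⟩
    · -- maxchain characterization → chain
      intro hmc A hA hne hchain
      set S : Set (Set (Set X)) :=
        {A' | A ⊆ A' ∧ A' ⊆ closedBallean X ∧ IsChain (· ⊆ ·) A'} with hSdef
      have hub : ∀ c ⊆ S, IsChain (· ⊆ ·) c → c.Nonempty →
          ∃ ub ∈ S, ∀ s ∈ c, s ⊆ ub := by
        intro c hcS hcchain hcne
        obtain ⟨s₀, hs₀⟩ := hcne
        refine ⟨⋃₀ c, ⟨(hcS hs₀).1.trans (Set.subset_sUnion_of_mem hs₀), ?_, ?_⟩,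
          fun s hs => Set.subset_sUnion_of_mem hs⟩
        · rintro B ⟨s, hs, hBs⟩
          exact (hcS hs).2.1 hBs
        · rintro B₁ ⟨s₁, hs₁, h1⟩ B₂ ⟨s₂, hs₂, h2⟩ hne'
          rcases eq_or_ne s₁ s₂ with h | h
          · exact (hcS hs₂).2.2 (h ▸ h1) h2 hne'
          · rcases hcchain hs₁ hs₂ h with h' | h'
            · exact (hcS hs₂).2.2 (h' h1) h2 hne'
            · exact (hcS hs₁).2.2 h1 (h' h2) hne'
      obtain ⟨M, hAM, hM⟩ := zorn_subset_nonempty S hub A ⟨subset_rfl, hA, hchain⟩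
      have hMS : M ∈ S := hM.1
      have hMmax : ∀ A'' : Set (Set X), A'' ⊆ closedBallean X → IsChain (· ⊆ ·) A'' →
          M ⊆ A'' → M = A'' := by
        intro A'' hA''B hA''chain hMA''
        exact subset_antisymm hMA'' (hM.2 ⟨hAM.trans hMA'', hA''B, hA''chain⟩ hMA'')
      obtain ⟨a, hMa⟩ := (hmc M hMS.2.1).1 ⟨hMS.2.2, hMmax⟩
      refine ⟨a, Set.mem_iInter₂.2 fun B hB => ?_⟩
      have : B ∈ {B ∈ closedBallean X | a ∈ B} := hMa ▸ hAM hB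
      exact this.2
end

section
/- Let (X,d) be a bounded ultrametric space with at least two points and write D = diam X (the finite diameter sup{d(x,y) : x,y ∈ X}). If there exist distinct points x₁, x₂ ∈ X with d(x₁,x₂) = D, then: (a) the relation u ~ v defined by d(u,v) < D is an equivalence relation on X; (b) for every c ∈ X the equivalence class of c equals the open ball {x ∈ X : d(x,c) < D}; and (c) whenever u ~ v fails, d(u,v) = D. Hence the diametrical graph of (X,d) is nonempty if and only if it is complete multipartite, and its parts are exactly the open balls of radius D centered at points of X. -/
/-- In a bounded ultrametric space with at least two points in which the
diameter is attained, non-adjacency in the diametrical graph (i.e. `dist u v <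
diam X`) is an equivalence relation whose classes are the open balls of radius
`diam X`, and any two non-equivalent points realize the diameter; i.e. the
diametrical graph is complete multipartite with the indicated parts. -/
theorem diametrical_graph_complete_multipartite {X : Type*} [MetricSpace X]
    (hu : ∀ x y z : X, dist x y ≤ max (dist x z) (dist z y))
    (hb : Bornology.IsBounded (Set.univ : Set X))
    (x₁ x₂ : X) (hne : x₁ ≠ x₂)
    (hd : dist x₁ x₂ = Metric.diam (Set.univ : Set X)) :
    Equivalence (fun u v : X => dist u v < Metric.diam (Set.univ : Set X)) ∧
    (∀ c : X, {x : X | dist x c < Metric.diam (Set.univ : Set X)} =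
      Metric.ball c (Metric.diam (Set.univ : Set X))) ∧
    (∀ u v : X, ¬ dist u v < Metric.diam (Set.univ : Set X) →
      dist u v = Metric.diam (Set.univ : Set X)) := by
  have hD : 0 < Metric.diam (Set.univ : Set X) := by
    rw [← hd]; exact dist_pos.mpr hne
  refine ⟨⟨fun x => by simpa using hD, fun {x y} h => by rwa [dist_comm],
    fun {x y z} h1 h2 => lt_of_le_of_lt (hu x z y) (max_lt h1 h2)⟩, ?_, ?_⟩
  · intro c
    ext x
    simp [Metric.mem_ball, dist_comm]
  · intro u v h
    exact le_antisymm (Metric.dist_le_diam_of_mem hb trivial trivial) (not_lt.mp h)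
end

section
/- Let (X,d) be a totally bounded ultrametric space with at least two points. Then there exist distinct x₁, x₂ ∈ X with d(x₁,x₂) = diam X; the relation u ~ v defined by d(u,v) < diam X is an equivalence relation on X whose equivalence classes are exactly the open balls {x : d(x,c) < diam X} for c ∈ X; and the set of equivalence classes is finite and has at least two elements (the diametrical graph of X is complete k-partite for some integer k ≥ 2). -/
/-- In a totally bounded ultrametric space with at least two points, the
diameter is attained, non-adjacency in the diametrical graph is an equivalence
relation whose classes are the open balls of radius `diam X`, and there are
finitely many (at least two) such classes: the diametrical graph is complete
`k`-partite for some integer `k ≥ 2`. -/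
theorem diametrical_graph_of_totally_bounded {X : Type*} [MetricSpace X]
    (hu : ∀ x y z : X, dist x y ≤ max (dist x z) (dist z y))
    (htb : TotallyBounded (Set.univ : Set X))
    (h2 : ∃ x y : X, x ≠ y) :
    (∃ x₁ x₂ : X, x₁ ≠ x₂ ∧ dist x₁ x₂ = Metric.diam (Set.univ : Set X)) ∧
    Equivalence (fun u v : X => dist u v < Metric.diam (Set.univ : Set X)) ∧
    (∀ c : X, {x : X | dist x c < Metric.diam (Set.univ : Set X)} =
      Metric.ball c (Metric.diam (Set.univ : Set X))) ∧
    Set.Finite {s : Set X | ∃ c : X, s = Metric.ball c (Metric.diam (Set.univ : Set X))} ∧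
    (∃ s₁ s₂ : Set X, s₁ ≠ s₂ ∧
      (∃ c : X, s₁ = Metric.ball c (Metric.diam (Set.univ : Set X))) ∧
      (∃ c : X, s₂ = Metric.ball c (Metric.diam (Set.univ : Set X)))) := by
  classical
  obtain ⟨p, q, hpq⟩ := h2
  have hb : Bornology.IsBounded (Set.univ : Set X) := htb.isBounded
  set D := Metric.diam (Set.univ : Set X) with hDdef
  have hD : 0 < D := by
    have h1 := Metric.dist_le_diam_of_mem hb (Set.mem_univ p) (Set.mem_univ q)
    have h2' : 0 < dist p q := dist_pos.mpr hpq
    linarith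
  -- cover by finitely many balls of radius D/2
  obtain ⟨t, htf, htc⟩ := Metric.totallyBounded_iff.mp htb (D / 2) (by linarith)
  have hcov : ∀ x : X, ∃ a ∈ t, dist x a < D / 2 := by
    intro x
    have := htc (Set.mem_univ x)
    simp only [Set.mem_iUnion, Metric.mem_ball] at this
    obtain ⟨a, ha, h⟩ := this
    exact ⟨a, ha, h⟩
  -- ball equality lemma
  have hballeq : ∀ c a : X, dist c a < D → Metric.ball c D = Metric.ball a D := by
    intro c a hca
    ext x
    simp only [Metric.mem_ball]
    constructor
    · intro hx
      calc dist x a ≤ max (dist x c) (dist c a) := hu x a c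
        _ < D := max_lt hx hca
    · intro hx
      have : dist a c < D := by rwa [dist_comm]
      calc dist x c ≤ max (dist x a) (dist a c) := hu x c a
        _ < D := max_lt hx this
  -- diameter attained at a pair of centers
  obtain ⟨ap, hapt, hapd⟩ := hcov p
  have htne : (htf.toFinset ×ˢ htf.toFinset).Nonempty := by
    refine ⟨(ap, ap), ?_⟩
    simp [Finset.mem_product, htf.mem_toFinset, hapt]
  obtain ⟨⟨a, b⟩, habmem, habmax⟩ :=
    Finset.exists_max_image (htf.toFinset ×ˢ htf.toFinset) (fun p => dist p.1 p.2) htne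
  have haT : a ∈ t := by
    have := (Finset.mem_product.mp habmem).1
    rwa [htf.mem_toFinset] at this
  have hbT : b ∈ t := by
    have := (Finset.mem_product.mp habmem).2
    rwa [htf.mem_toFinset] at this
  have hMle : dist a b ≤ D :=
    Metric.dist_le_diam_of_mem hb (Set.mem_univ a) (Set.mem_univ b)
  have hdiamle : D ≤ max (D / 2) (dist a b) := by
    refine Metric.diam_le_of_forall_dist_le (le_trans (by linarith) (le_max_left _ _)) ?_
    intro x _ y _
    obtain ⟨cx, hcxt, hcx⟩ := hcov x
    obtain ⟨cy, hcyt, hcy⟩ := hcov y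
    have hmem : (cx, cy) ∈ htf.toFinset ×ˢ htf.toFinset := by
      simp [Finset.mem_product, htf.mem_toFinset, hcxt, hcyt]
    have hcc : dist cx cy ≤ dist a b := habmax (cx, cy) hmem
    have h1 : dist x y ≤ max (dist x cx) (dist cx y) := hu x y cx
    have h2 : dist cx y ≤ max (dist cx cy) (dist cy y) := hu cx y cy
    have h3 : dist cy y < D / 2 := by rwa [dist_comm]
    calc dist x y ≤ max (dist x cx) (max (dist cx cy) (dist cy y)) :=
          le_trans h1 (max_le_max le_rfl h2)
      _ ≤ max (D / 2) (dist a b) := by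
          apply max_le
          · exact le_max_of_le_left hcx.le
          · exact max_le (le_max_of_le_right hcc) (le_max_of_le_left h3.le)
  have hML : D ≤ dist a b := by
    rcases le_max_iff.mp hdiamle with h | h
    · linarith
    · exact h
  have hab : dist a b = D := le_antisymm hMle hML
  have hane : a ≠ b := by
    intro h
    rw [h, dist_self] at hab
    linarith
  refine ⟨⟨a, b, hane, hab⟩, ?_, ?_, ?_, ?_⟩
  · constructor
    · intro x; simpa using hD
    · intro x y h; rwa [dist_comm]
    · intro x y z h1 h2
      exact lt_of_le_of_lt (hu x z y) (max_lt h1 h2)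
  · intro c
    ext x
    simp [Metric.mem_ball]
  · have hsub : {s : Set X | ∃ c : X, s = Metric.ball c D} ⊆
        (fun a => Metric.ball a D) '' t := by
      rintro s ⟨c, rfl⟩
      obtain ⟨cc, hcct, hcc⟩ := hcov c
      exact ⟨cc, hcct, (hballeq c cc (by linarith)).symm⟩
    exact ((htf.image _).subset hsub)
  · refine ⟨Metric.ball a D, Metric.ball b D, ?_, ⟨a, rfl⟩, ⟨b, rfl⟩⟩
    intro h
    have ha : a ∈ Metric.ball a D := Metric.mem_ball_self hD
    rw [h] at ha
    rw [Metric.mem_ball, hab] at ha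
    exact lt_irrefl _ ha
end

section
/- Let (X,d) be a totally bounded ultrametric space. Then for every point c ∈ X and every real r > 0, the diameter of the open ball B_r(c) = {x ∈ X : d(x,c) < r} is strictly less than r: diam B_r(c) < r. -/
/-- In a totally bounded ultrametric space, the diameter of every open ball of
radius `r > 0` is strictly less than `r`. -/
theorem diam_ball_lt_radius {X : Type*} [MetricSpace X]
    (hu : ∀ x y z : X, dist x y ≤ max (dist x z) (dist z y))
    (htb : TotallyBounded (Set.univ : Set X))
    (c : X) {r : ℝ} (hr : 0 < r) :
    Metric.diam (Metric.ball c r) < r := by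
  classical
  obtain ⟨T, hTfin, hTcov⟩ := Metric.totallyBounded_iff.mp htb (r/2) (by linarith)
  set F : Finset ℝ :=
    insert (r/2) (hTfin.toFinset.image (fun y => if dist y c < r then dist y c else 0)) with hF
  have hFne : F.Nonempty := ⟨r/2, Finset.mem_insert_self _ _⟩
  set s := F.max' hFne with hs
  have hs_lt : s < r := by
    rw [hs, Finset.max'_lt_iff]
    intro a ha
    rcases Finset.mem_insert.mp ha with h | h
    · linarith [h.symm ▸ (by linarith : r/2 < r)]
    · obtain ⟨y, _, hy⟩ := Finset.mem_image.mp h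
      by_cases hyc : dist y c < r
      · rw [← hy]; simp [hyc]
      · simp only [hyc, if_false] at hy; linarith [hy ▸ hr]
  have hhalf : r/2 ≤ s := Finset.le_max' _ _ (Finset.mem_insert_self _ _)
  have hs0 : 0 ≤ s := le_trans (by linarith) hhalf
  have hdist : ∀ x ∈ Metric.ball c r, dist x c ≤ s := by
    intro x hx
    have := hTcov (Set.mem_univ x)
    simp only [Set.mem_iUnion] at this
    obtain ⟨y, hyT, hxy⟩ := this
    rw [Metric.mem_ball] at hxy hx
    have hyc : dist y c < r := by
      calc dist y c ≤ max (dist y x) (dist x c) := hu y c x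
        _ < r := max_lt (by rw [dist_comm]; linarith) hx
    have hmem : dist y c ∈ F := by
      apply Finset.mem_insert_of_mem
      apply Finset.mem_image.mpr
      exact ⟨y, hTfin.mem_toFinset.mpr hyT, by simp [hyc]⟩
    calc dist x c ≤ max (dist x y) (dist y c) := hu x c y
      _ ≤ s := max_le (le_trans (le_of_lt hxy) hhalf) (Finset.le_max' _ _ hmem)
  have hdiam : Metric.diam (Metric.ball c r) ≤ s := by
    apply Metric.diam_le_of_forall_dist_le hs0
    intro x hx y hy
    calc dist x y ≤ max (dist x c) (dist c y) := hu x y c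
      _ ≤ s := max_le (hdist x hx) (by rw [dist_comm]; exact hdist y hy)
  linarith
end

section
/- For a set A ⊆ ℝ the following three statements are equivalent: (1) there exists an infinite compact ultrametric space X whose distance set D(X) equals A; (2) there exists an infinite totally bounded ultrametric space X whose distance set D(X) equals A; (3) there exists a strictly decreasing sequence (xₙ)_{n∈ℕ} of real numbers with limit 0 such that A = {0} ∪ {xₙ : n ∈ ℕ}. -/
open Filter Set Metric

/-- greatest element of a nonempty set of positive reals with finite tails -/
lemma enum_greatest {S : Set ℝ} (hpos : ∀ s ∈ S, 0 < s)
    (hfin : ∀ r > 0, (S ∩ Set.Ici r).Finite) (hne : S.Nonempty) :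
    ∃ m ∈ S, ∀ u ∈ S, u ≤ m := by
  obtain ⟨t, ht⟩ := hne
  have hF : (S ∩ Set.Ici t).Finite := hfin t (hpos t ht)
  have hFne : (S ∩ Set.Ici t).Nonempty := ⟨t, ht, le_refl t⟩
  obtain ⟨m, hm, hmax⟩ := hF.exists_maximalFor id _ hFne
  refine ⟨m, hm.1, fun u hu => ?_⟩
  rcases le_total u t with h | h
  · exact h.trans hm.2
  · rcases le_total u m with h' | h'
    · exact h'
    · exact hmax ⟨hu, h⟩ h'

lemma enum_of_set {S : Set ℝ} (hpos : ∀ s ∈ S, 0 < s)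
    (hfin : ∀ r > 0, (S ∩ Set.Ici r).Finite)
    (hsm : ∀ r > 0, ∃ s ∈ S, s < r) :
    ∃ x : ℕ → ℝ, StrictAnti x ∧ Filter.Tendsto x Filter.atTop (nhds 0) ∧
      S = Set.range x := by
  have hSne : S.Nonempty := by obtain ⟨s, hs, _⟩ := hsm 1 one_pos; exact ⟨s, hs⟩
  -- sub-sets below b
  have hsub : ∀ b > 0, ∃ m ∈ S ∩ Set.Iio b, ∀ u ∈ S ∩ Set.Iio b, u ≤ m := by
    intro b hb
    have hpos' : ∀ s ∈ S ∩ Set.Iio b, 0 < s := fun s hs => hpos s hs.1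
    have hfin' : ∀ r > 0, ((S ∩ Set.Iio b) ∩ Set.Ici r).Finite := fun r hr =>
      (hfin r hr).subset (fun u hu => ⟨hu.1.1, hu.2⟩)
    have hne' : (S ∩ Set.Iio b).Nonempty := by
      obtain ⟨s, hs, hsb⟩ := hsm b hb; exact ⟨s, hs, hsb⟩
    exact enum_greatest hpos' hfin' hne'
  classical
  set g : ℝ → ℝ := fun b => if h : 0 < b then (hsub b h).choose else 0 with hg
  have hgmem : ∀ b > 0, g b ∈ S ∩ Set.Iio b ∧ ∀ u ∈ S ∩ Set.Iio b, u ≤ g b := by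
    intro b hb
    simp only [hg, dif_pos hb]
    exact ⟨(hsub b hb).choose_spec.1, (hsub b hb).choose_spec.2⟩
  obtain ⟨m0, hm0, hm0max⟩ := enum_greatest hpos hfin hSne
  set x : ℕ → ℝ := fun n => Nat.rec m0 (fun _ p => g p) n with hx
  have hx0 : x 0 = m0 := rfl
  have hxs : ∀ n, x (n + 1) = g (x n) := fun n => rfl
  have hmem : ∀ n, x n ∈ S := by
    intro n; induction n with
    | zero => exact hm0
    | succ k ih =>
      rw [hxs]
      exact ((hgmem (x k) (hpos _ ih)).1).1
  have hlt : ∀ n, x (n + 1) < x n := by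
    intro n; rw [hxs]
    exact ((hgmem (x n) (hpos _ (hmem n))).1).2
  have hanti : StrictAnti x := strictAnti_nat_of_succ_lt hlt
  -- every s ∈ S with no index has s ≤ x n for all n
  have hbound : ∀ s ∈ S, ∀ n, s ≤ x n ∨ ∃ m ≤ n, x m = s := by
    intro s hs n
    induction n with
    | zero => exact Or.inl (hx0 ▸ hm0max s hs)
    | succ k ih =>
      rcases ih with h | ⟨m, hm, he⟩
      · rcases eq_or_lt_of_le h with he | hlt'
        · exact Or.inr ⟨k, Nat.le_succ k, he.symm⟩
        · refine Or.inl ?_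
          rw [hxs]
          exact (hgmem (x k) (hpos _ (hmem k))).2 s ⟨hs, hlt'⟩
      · exact Or.inr ⟨m, hm.trans (Nat.le_succ k), he⟩
  -- tendsto
  have hsmall : ∀ ε > 0, ∃ N, x N < ε := by
    intro ε hε
    by_contra hcon
    push_neg at hcon
    have : (Set.range x).Finite := (hfin ε hε).subset (by
      rintro _ ⟨n, rfl⟩; exact ⟨hmem n, hcon n⟩)
    exact (Set.infinite_range_of_injective hanti.injective) this
  have htend : Filter.Tendsto x Filter.atTop (nhds 0) := by
    rw [Metric.tendsto_atTop]
    intro ε hε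
    obtain ⟨N, hN⟩ := hsmall ε hε
    refine ⟨N, fun n hn => ?_⟩
    rw [Real.dist_eq, sub_zero, abs_of_pos (hpos _ (hmem n))]
    exact lt_of_le_of_lt (hanti.antitone hn) hN
  refine ⟨x, hanti, htend, ?_⟩
  ext s
  constructor
  · intro hs
    by_contra hcon
    have h1 : ∀ n, s ≤ x n := by
      intro n
      rcases hbound s hs n with h | ⟨m, _, he⟩
      · exact h
      · exact absurd ⟨m, he⟩ hcon
    obtain ⟨N, hN⟩ := hsmall s (hpos s hs)
    exact absurd (h1 N) (not_le.mpr hN)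
  · rintro ⟨n, rfl⟩; exact hmem n

-- ultrametric center lemma
lemma ultra_center {X : Type} [MetricSpace X]
    (hu : ∀ x y z : X, dist x y ≤ max (dist x z) (dist z y))
    {x y cx cy : X} {r : ℝ} (hx : dist x cx < r) (hy : dist y cy < r)
    (hxy : r ≤ dist x y) : dist cx cy = dist x y := by
  have h1 : dist cx cy ≤ dist x y := by
    have a := hu cx cy x
    have b := hu x cy y
    have hcx : dist cx x = dist x cx := dist_comm _ _
    have hcy : dist y cy = dist cy y := dist_comm _ _
    rcases max_cases (dist cx x) (dist x cy) with ⟨he, _⟩ | ⟨he, _⟩ <;>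
      rcases max_cases (dist x y) (dist y cy) with ⟨he2, _⟩ | ⟨he2, _⟩ <;>
      rw [he] at a <;> rw [he2] at b <;> linarith
  have h2 : dist x y ≤ dist cx cy := by
    have a := hu x y cx
    have b := hu cx y cy
    rcases max_cases (dist x cx) (dist cx y) with ⟨he, _⟩ | ⟨he, _⟩ <;>
      rcases max_cases (dist cx cy) (dist cy y) with ⟨he2, _⟩ | ⟨he2, _⟩ <;>
      rw [he] at a <;> rw [he2] at b <;>
      simp [dist_comm] at * <;> linarith
  linarith

lemma tb_to_seq {A : Set ℝ} (X : Type) (m : MetricSpace X) (hinf : Infinite X)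
    (htb : TotallyBounded (Set.univ : Set X))
    (hu : ∀ x y z : X, dist x y ≤ max (dist x z) (dist z y))
    (hd : {r : ℝ | ∃ x y : X, dist x y = r} = A) :
    ∀ r > 0, ((A \ {0}) ∩ Set.Ici r).Finite := by
  intro r hr
  obtain ⟨t, htf, htc⟩ := (Metric.totallyBounded_iff).mp htb r hr
  classical
  have hc : ∀ p : X, ∃ c ∈ t, dist p c < r := by
    intro p
    have := htc (Set.mem_univ p)
    simp only [Set.mem_iUnion, Metric.mem_ball] at this
    obtain ⟨c, hc, hd⟩ := this
    exact ⟨c, hc, hd⟩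
  choose c hct hcd using hc
  have hsub : (A \ {0}) ∩ Set.Ici r ⊆ (fun p : X × X => dist p.1 p.2) '' (t ×ˢ t) := by
    rintro s ⟨⟨hsA, _⟩, hsr⟩
    rw [← hd] at hsA
    obtain ⟨x, y, hxy⟩ := hsA
    refine ⟨(c x, c y), ⟨hct x, hct y⟩, ?_⟩
    simp only
    rw [ultra_center hu (hcd x) (hcd y) (hxy ▸ hsr), hxy]
  exact ((htf.prod htf).image _).subset hsub

lemma tb_small {A : Set ℝ} (X : Type) (m : MetricSpace X) (hinf : Infinite X)
    (htb : TotallyBounded (Set.univ : Set X))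
    (hd : {r : ℝ | ∃ x y : X, dist x y = r} = A) :
    ∀ r > 0, ∃ s ∈ A \ {0}, s < r := by
  intro r hr
  obtain ⟨t, htf, htc⟩ := (Metric.totallyBounded_iff).mp htb (r/2) (by linarith)
  classical
  have hc : ∀ p : X, ∃ c : t, dist p (c : X) < r/2 := by
    intro p
    have := htc (Set.mem_univ p)
    simp only [Set.mem_iUnion, Metric.mem_ball] at this
    obtain ⟨c, hc, hd⟩ := this
    exact ⟨⟨c, hc⟩, hd⟩
  choose c hcd using hc
  haveI : Finite t := htf.to_subtype
  obtain ⟨x, y, hne, hfe⟩ := Finite.exists_ne_map_eq_of_infinite c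
  have hlt : dist x y < r := by
    have h1 : dist x (c x : X) < r/2 := hcd x
    have h2 : dist y (c y : X) < r/2 := hcd y
    rw [hfe] at h1
    have h3 : dist x y ≤ dist x (c y : X) + dist (c y : X) y := dist_triangle _ _ _
    rw [dist_comm (c y : X) y] at h3
    linarith
  refine ⟨dist x y, ⟨?_, ?_⟩, hlt⟩
  · rw [← hd]; exact ⟨x, y, rfl⟩
  · simp only [Set.mem_singleton_iff]
    exact ne_of_gt (dist_pos.mpr hne)

section Construction
variable (x : ℕ → ℝ)

/-- rank of a pair -/
def rk : Option ℕ → Option ℕ → ℕ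
  | some m, some n => min m n
  | some m, none => m
  | none, some n => n
  | none, none => 0

noncomputable def dfun (a b : Option ℕ) : ℝ :=
  if a = b then 0 else x (rk a b)

variable (hx : StrictAnti x) (hpos : ∀ n, 0 < x n)

lemma rk_comm (a b : Option ℕ) : rk a b = rk b a := by
  cases a <;> cases b <;> simp [rk, Nat.min_comm]

lemma dfun_self (a : Option ℕ) : dfun x a a = 0 := by simp [dfun]

lemma dfun_comm (a b : Option ℕ) : dfun x a b = dfun x b a := by
  unfold dfun
  by_cases h : a = b
  · simp [h]
  · rw [if_neg h, if_neg (Ne.symm h), rk_comm]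

include hpos in
lemma dfun_nonneg (a b : Option ℕ) : 0 ≤ dfun x a b := by
  unfold dfun
  by_cases h : a = b
  · simp [h]
  · rw [if_neg h]; exact (hpos _).le

include hpos in
lemma dfun_pos {a b : Option ℕ} (h : a ≠ b) : 0 < dfun x a b := by
  unfold dfun; rw [if_neg h]; exact hpos _

lemma rk_key {a b c : Option ℕ} (hab : a ≠ b) (hca : c ≠ a) (hcb : c ≠ b) :
    rk a c ≤ rk a b ∨ rk c b ≤ rk a b := by
  cases a <;> cases b <;> cases c <;> simp_all [rk] <;> omega

include hx hpos in
lemma dfun_ultra (a b c : Option ℕ) :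
    dfun x a b ≤ max (dfun x a c) (dfun x c b) := by
  by_cases hab : a = b
  · subst hab
    rw [dfun_self]
    exact le_max_of_le_left (dfun_nonneg x hpos a c)
  by_cases hca : c = a
  · subst hca
    rw [dfun_self]
    exact le_max_of_le_right (le_of_eq rfl)
  by_cases hcb : c = b
  · subst hcb
    rw [dfun_self]
    exact le_max_of_le_left (le_of_eq rfl)
  · unfold dfun
    rw [if_neg hab, if_neg (fun h : a = c => hca h.symm), if_neg hcb]
    rcases rk_key hab hca hcb with h | h
    · exact le_max_of_le_left (hx.antitone h)
    · exact le_max_of_le_right (hx.antitone h)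

noncomputable def optionMetric : MetricSpace (Option ℕ) where
  dist := dfun x
  dist_self := dfun_self x
  dist_comm := dfun_comm x
  dist_triangle := by
    intro a b c
    refine le_trans (dfun_ultra x hx hpos a c b) ?_
    exact max_le (le_add_of_nonneg_right (dfun_nonneg x hpos _ _))
      (le_add_of_nonneg_left (dfun_nonneg x hpos _ _))
  eq_of_dist_eq_zero := by
    intro a b h
    by_contra hne
    exact absurd h (ne_of_gt (dfun_pos x hpos hne))

end Construction

lemma seq_to_compact {A : Set ℝ} (x : ℕ → ℝ) (hx : StrictAnti x)
    (htend : Filter.Tendsto x Filter.atTop (nhds 0))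
    (hA : A = {0} ∪ Set.range x) :
    ∃ (X : Type) (_ : MetricSpace X), Infinite X ∧ CompactSpace X ∧
      (∀ x y z : X, dist x y ≤ max (dist x z) (dist z y)) ∧
      {r : ℝ | ∃ x y : X, dist x y = r} = A := by
  have hpos : ∀ n, 0 < x n := by
    intro n
    have h1 : 0 ≤ x (n + 1) := by
      refine le_of_tendsto htend ?_
      filter_upwards [Filter.eventually_ge_atTop (n + 1)] with m hm
      exact hx.antitone hm
    exact lt_of_le_of_lt h1 (hx (Nat.lt_succ_self n))
  letI m := optionMetric x hx hpos
  refine ⟨Option ℕ, m, inferInstance, ?_, fun a b c => dfun_ultra x hx hpos a b c, ?_⟩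
  · -- compact
    have htendX : Filter.Tendsto (fun n => (some n : Option ℕ)) Filter.atTop (nhds none) := by
      rw [Metric.tendsto_atTop]
      intro ε hε
      rw [Metric.tendsto_atTop] at htend
      obtain ⟨N, hN⟩ := htend ε hε
      refine ⟨N, fun n hn => ?_⟩
      have : dist (some n : Option ℕ) none = x n := by
        show dfun x (some n) none = x n
        simp [dfun, rk]
      rw [this]
      have := hN n hn
      rw [Real.dist_eq, sub_zero, abs_of_pos (hpos n)] at this
      exact this
    have hcomp := htendX.isCompact_insert_range
    have huniv : insert none (Set.range (fun n => (some n : Option ℕ))) = Set.univ := by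
      ext a
      cases a <;> simp
    rw [huniv] at hcomp
    exact isCompact_univ_iff.mp hcomp
  · -- distance set
    rw [hA]
    ext s
    constructor
    · rintro ⟨a, b, rfl⟩
      by_cases h : a = b
      · subst h
        left
        exact dist_self a
      · right
        show dfun x a b ∈ Set.range x
        simp [dfun, if_neg h]
    · rintro (hs | ⟨n, rfl⟩)
      · simp only [Set.mem_singleton_iff] at hs
        exact ⟨none, none, hs ▸ dist_self none⟩
      · refine ⟨some n, none, ?_⟩
        show dfun x (some n) none = x n
        simp [dfun, rk]

lemma tb_to_seq_full {A : Set ℝ}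
    (h : ∃ (X : Type) (_ : MetricSpace X), Infinite X ∧
        TotallyBounded (Set.univ : Set X) ∧
        (∀ x y z : X, dist x y ≤ max (dist x z) (dist z y)) ∧
        {r : ℝ | ∃ x y : X, dist x y = r} = A) :
    ∃ x : ℕ → ℝ, StrictAnti x ∧ Filter.Tendsto x Filter.atTop (nhds 0) ∧
      A = {0} ∪ Set.range x := by
  obtain ⟨X, m, hinf, htb, hu, hd⟩ := h
  have h0 : (0 : ℝ) ∈ A := by
    rw [← hd]
    obtain ⟨p⟩ := hinf.nonempty
    exact ⟨p, p, dist_self p⟩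
  have hpos : ∀ s ∈ A \ {0}, 0 < s := by
    rintro s ⟨hsA, hs0⟩
    rw [← hd] at hsA
    obtain ⟨a, b, rfl⟩ := hsA
    exact lt_of_le_of_ne dist_nonneg (Ne.symm hs0)
  obtain ⟨x, hx, ht, hr⟩ := enum_of_set hpos (tb_to_seq X m hinf htb hu hd)
    (tb_small X m hinf htb hd)
  refine ⟨x, hx, ht, ?_⟩
  rw [← hr]
  ext s
  simp only [Set.mem_union, Set.mem_diff, Set.mem_singleton_iff]
  constructor
  · intro hs
    by_cases h : s = 0
    · exact Or.inl h
    · exact Or.inr ⟨hs, h⟩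
  · rintro (rfl | ⟨hs, _⟩)
    · exact h0
    · exact hs

/-- A set `A ⊆ ℝ` is the distance set of an infinite compact ultrametric
space iff it is the distance set of an infinite totally bounded ultrametric
space iff it equals `{0} ∪ {xₙ : n ∈ ℕ}` for some strictly decreasing sequence
`(xₙ)` tending to `0`. -/
theorem distance_set_of_infinite_totally_bounded (A : Set ℝ) :
    ((∃ (X : Type) (_ : MetricSpace X), Infinite X ∧ CompactSpace X ∧
        (∀ x y z : X, dist x y ≤ max (dist x z) (dist z y)) ∧
        {r : ℝ | ∃ x y : X, dist x y = r} = A) ↔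
      (∃ (X : Type) (_ : MetricSpace X), Infinite X ∧
        TotallyBounded (Set.univ : Set X) ∧
        (∀ x y z : X, dist x y ≤ max (dist x z) (dist z y)) ∧
        {r : ℝ | ∃ x y : X, dist x y = r} = A)) ∧
    ((∃ (X : Type) (_ : MetricSpace X), Infinite X ∧
        TotallyBounded (Set.univ : Set X) ∧
        (∀ x y z : X, dist x y ≤ max (dist x z) (dist z y)) ∧
        {r : ℝ | ∃ x y : X, dist x y = r} = A) ↔
      (∃ x : ℕ → ℝ, StrictAnti x ∧ Filter.Tendsto x Filter.atTop (nhds 0) ∧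
        A = {0} ∪ Set.range x)) := by
  have c2t : (∃ (X : Type) (_ : MetricSpace X), Infinite X ∧ CompactSpace X ∧
        (∀ x y z : X, dist x y ≤ max (dist x z) (dist z y)) ∧
        {r : ℝ | ∃ x y : X, dist x y = r} = A) →
      (∃ (X : Type) (_ : MetricSpace X), Infinite X ∧
        TotallyBounded (Set.univ : Set X) ∧
        (∀ x y z : X, dist x y ≤ max (dist x z) (dist z y)) ∧
        {r : ℝ | ∃ x y : X, dist x y = r} = A) := by
    rintro ⟨X, m, hinf, hcomp, hu, hd⟩
    exact ⟨X, m, hinf, isCompact_univ.totallyBounded, hu, hd⟩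
  have s2c : (∃ x : ℕ → ℝ, StrictAnti x ∧ Filter.Tendsto x Filter.atTop (nhds 0) ∧
        A = {0} ∪ Set.range x) →
      (∃ (X : Type) (_ : MetricSpace X), Infinite X ∧ CompactSpace X ∧
        (∀ x y z : X, dist x y ≤ max (dist x z) (dist z y)) ∧
        {r : ℝ | ∃ x y : X, dist x y = r} = A) := by
    rintro ⟨x, hx, ht, hA⟩
    exact seq_to_compact x hx ht hA
  refine ⟨⟨c2t, fun h => s2c (tb_to_seq_full h)⟩,
    ⟨tb_to_seq_full, fun h => c2t (s2c h)⟩⟩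
end

section
/- Let (X,d) be a nonempty compact ultrametric space with distance set D(X) = {d(x,y) : x,y ∈ X}, and let p ∈ D(X) with p > 0. Then p is an isolated point of D(X) with respect to the standard topology of ℝ: there exists ε > 0 such that D(X) ∩ (p−ε, p+ε) = {p}. -/
/-- In a nonempty compact ultrametric space, every strictly positive element
of the distance set is an isolated point of the distance set in `ℝ`. -/
theorem isolated_points_of_distance_set {X : Type*} [MetricSpace X] [Nonempty X]
    [CompactSpace X]
    (hu : ∀ x y z : X, dist x y ≤ max (dist x z) (dist z y))
    {p : ℝ} (hp : p ∈ {r : ℝ | ∃ x y : X, dist x y = r}) (hp0 : 0 < p) :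
    ∃ ε : ℝ, 0 < ε ∧
      {r : ℝ | ∃ x y : X, dist x y = r} ∩ Set.Ioo (p - ε) (p + ε) = {p} := by
  by_contra h
  push_neg at h
  set S := {r : ℝ | ∃ x y : X, dist x y = r} with hSdef
  have key : ∀ n : ℕ, ∃ q, q ∈ S ∩ Set.Ioo (p - 1/(n+1)) (p + 1/(n+1)) ∧ q ≠ p := by
    intro n
    have hε : (0:ℝ) < 1/(n+1) := by positivity
    have hne := h _ hε
    have hpin : p ∈ S ∩ Set.Ioo (p - 1/(n+1)) (p + 1/(n+1)) := by
      refine ⟨hp, ?_, ?_⟩ <;> linarith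
    by_contra hc
    push_neg at hc
    exact hne (Set.eq_singleton_iff_unique_mem.mpr ⟨hpin, fun q hq => hc q hq⟩)
  choose q hq hqne using key
  have hqS : ∀ n, ∃ x y : X, dist x y = q n := fun n => (hq n).1
  choose x y hxy using hqS
  set u : ℕ → X × X := fun n => (x n, y n) with hudef
  obtain ⟨⟨a, b⟩, -, φ, hφ, hlim⟩ :=
    isCompact_univ.tendsto_subseq (fun n => Set.mem_univ (u n))
  -- q (φ n) → p by squeezing
  have h1 : Filter.Tendsto (fun n : ℕ => 1/((n:ℝ)+1)) Filter.atTop (nhds 0) :=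
    tendsto_one_div_add_atTop_nhds_zero_nat
  have hql : Filter.Tendsto (fun n => q (φ n)) Filter.atTop (nhds p) := by
    have hlo : Filter.Tendsto (fun n : ℕ => p - 1/((n:ℝ)+1)) Filter.atTop (nhds p) := by
      simpa using (tendsto_const_nhds.sub h1)
    have hhi : Filter.Tendsto (fun n : ℕ => p + 1/((n:ℝ)+1)) Filter.atTop (nhds p) := by
      simpa using (tendsto_const_nhds.add h1)
    have := tendsto_of_tendsto_of_tendsto_of_le_of_le hlo hhi
      (fun n => le_of_lt (hq n).2.1) (fun n => le_of_lt (hq n).2.2)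
    exact this.comp hφ.tendsto_atTop
  -- dist (u (φ n)).1 (u (φ n)).2 → dist a b
  have hdl : Filter.Tendsto (fun n => dist (u (φ n)).1 (u (φ n)).2) Filter.atTop
      (nhds (dist a b)) := by
    have hcont : Continuous fun z : X × X => dist z.1 z.2 := continuous_dist
    exact (hcont.tendsto (a, b)).comp hlim
  have hdq : (fun n => dist (u (φ n)).1 (u (φ n)).2) = fun n => q (φ n) := by
    funext n; exact hxy (φ n)
  have hab : dist a b = p := tendsto_nhds_unique (hdq ▸ hdl) hql
  -- pick N with dist (u (φ N)) (a,b) < p/2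
  have hev : ∀ᶠ n in Filter.atTop, dist (u (φ n)) (a, b) < p/2 := by
    have := Metric.tendsto_atTop.mp hlim (p/2) (by linarith)
    obtain ⟨N, hN⟩ := this
    exact Filter.eventually_atTop.mpr ⟨N, fun n hn => hN n hn⟩
  obtain ⟨N, hN⟩ := hev.exists
  have hxa : dist (x (φ N)) a < p/2 :=
    lt_of_le_of_lt (le_max_left _ _ |>.trans_eq (Prod.dist_eq (x := u (φ N)) (y := (a,b))).symm) hN
  have hyb : dist (y (φ N)) b < p/2 :=
    lt_of_le_of_lt (le_max_right _ _ |>.trans_eq (Prod.dist_eq (x := u (φ N)) (y := (a,b))).symm) hN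
  -- ultrametric isosceles argument
  have hub : dist (x (φ N)) (y (φ N)) ≤ p := calc
    dist (x (φ N)) (y (φ N)) ≤ max (dist (x (φ N)) a) (dist a (y (φ N))) := hu _ _ _
    _ ≤ max (dist (x (φ N)) a) (max (dist a b) (dist b (y (φ N)))) := by
        exact max_le_max le_rfl (hu _ _ _)
    _ ≤ p := by
        have h1 : dist b (y (φ N)) = dist (y (φ N)) b := dist_comm _ _
        apply max_le (by linarith)
        apply max_le (by linarith [hab.le])
        rw [h1]; linarith
  have hlb : p ≤ dist (x (φ N)) (y (φ N)) := by
    have h1 : dist a b ≤ max (dist a (x (φ N))) (dist (x (φ N)) b) := hu _ _ _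
    have h2 : dist (x (φ N)) b ≤ max (dist (x (φ N)) (y (φ N))) (dist (y (φ N)) b) :=
      hu _ _ _
    have hax : dist a (x (φ N)) = dist (x (φ N)) a := dist_comm _ _
    rw [hab, hax] at h1
    rcases le_max_iff.mp h1 with h | h
    · linarith
    · have := h.trans h2
      rcases le_max_iff.mp this with h' | h'
      · exact h'
      · linarith
  exact hqne (φ N) (by rw [← hxy (φ N)]; exact le_antisymm hub hlb)
end

section
/- A set A ⊆ [0,∞) is the distance set of some nonempty separable ultrametric space if and only if 0 ∈ A and A is at most countable. That is: (∃ a nonempty separable metric space X whose metric is an ultrametric and whose distance set D(X) equals A) ↔ (0 ∈ A ∧ A is countable). -/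
noncomputable def umDist (A : Set ℝ) (x y : ↥A) : ℝ := if x = y then 0 else max x.1 y.1

lemma umDist_nonneg {A : Set ℝ} (hA : A ⊆ Set.Ici 0) (x y : ↥A) : 0 ≤ umDist A x y := by
  unfold umDist
  split
  · exact le_rfl
  · exact le_max_of_le_left (hA x.2)

lemma umDist_ultra {A : Set ℝ} (x y z : ↥A) (hA : A ⊆ Set.Ici 0) :
    umDist A x y ≤ max (umDist A x z) (umDist A z y) := by
  by_cases hxy : x = y
  · simp only [umDist, if_pos hxy]
    exact le_max_of_le_left (umDist_nonneg hA x z)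
  · rw [show umDist A x y = max x.1 y.1 from if_neg hxy]
    by_cases hxz : x = z
    · have hzy : z ≠ y := by rw [← hxz]; exact hxy
      refine le_max_of_le_right ?_
      rw [show umDist A z y = max z.1 y.1 from if_neg hzy, ← hxz]
    · by_cases hzy : z = y
      · refine le_max_of_le_left ?_
        rw [show umDist A x z = max x.1 z.1 from if_neg hxz, hzy]
      · rw [show umDist A x z = max x.1 z.1 from if_neg hxz,
          show umDist A z y = max z.1 y.1 from if_neg hzy]
        exact max_le (le_max_of_le_left (le_max_left _ _))
          (le_max_of_le_right (le_max_right _ _))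

noncomputable def ultraMetricOn (A : Set ℝ) (hA : A ⊆ Set.Ici 0) : MetricSpace ↥A where
  dist := umDist A
  dist_self x := by simp [umDist]
  dist_comm x y := by
    unfold umDist
    by_cases h : x = y
    · simp [h]
    · simp [h, Ne.symm h, max_comm]
  dist_triangle x y z := by
    show umDist A x z ≤ umDist A x y + umDist A y z
    have h := umDist_ultra x z y hA
    have h1 := umDist_nonneg hA x y
    have h2 := umDist_nonneg hA y z
    calc umDist A x z ≤ max (umDist A x y) (umDist A y z) := h
      _ ≤ umDist A x y + umDist A y z :=
        max_le (le_add_of_nonneg_right h2) (le_add_of_nonneg_left h1)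
  eq_of_dist_eq_zero := by
    intro x y h
    by_contra hne
    have h : umDist A x y = 0 := h
    rw [show umDist A x y = max x.1 y.1 from if_neg hne] at h
    have hx := hA x.2
    have hy := hA y.2
    have hx0 : x.1 = 0 := le_antisymm (h ▸ le_max_left _ _) hx
    have hy0 : y.1 = 0 := le_antisymm (h ▸ le_max_right _ _) hy
    exact hne (Subtype.ext (hx0.trans hy0.symm))

/-- A set `A ⊆ [0,∞)` is the distance set of a nonempty separable ultrametric
space iff `0 ∈ A` and `A` is at most countable. -/
theorem distance_set_of_separable_ultrametric (A : Set ℝ) (hA : A ⊆ Set.Ici 0) :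
    (∃ (X : Type) (_ : MetricSpace X), Nonempty X ∧
        TopologicalSpace.SeparableSpace X ∧
        (∀ x y z : X, dist x y ≤ max (dist x z) (dist z y)) ∧
        {r : ℝ | ∃ x y : X, dist x y = r} = A) ↔
      (0 ∈ A ∧ A.Countable) := by
  constructor
  · rintro ⟨X, mX, ⟨x0⟩, hsep, hult, hD⟩
    constructor
    · rw [← hD]; exact ⟨x0, x0, dist_self x0⟩
    · obtain ⟨S, hScount, hSdense⟩ := TopologicalSpace.exists_countable_dense X
      rw [← hD]
      have hsub : {r : ℝ | ∃ x y : X, dist x y = r} ⊆ insert 0 (Set.image2 dist S S) := by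
        rintro r ⟨x, y, rfl⟩
        rcases eq_or_lt_of_le (dist_nonneg : (0:ℝ) ≤ dist x y) with h0 | hpos
        · exact Or.inl h0.symm
        · obtain ⟨x', hx'S, hx'⟩ := hSdense.exists_dist_lt x hpos
          obtain ⟨y', hy'S, hy'⟩ := hSdense.exists_dist_lt y hpos
          refine Or.inr ⟨x', hx'S, y', hy'S, ?_⟩
          have h1 : dist x' y' ≤ dist x y := by
            calc dist x' y' ≤ max (dist x' x) (dist x y') := hult _ _ _
              _ ≤ max (dist x' x) (max (dist x y) (dist y y')) :=
                  max_le_max le_rfl (hult _ _ _)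
              _ ≤ dist x y := by
                  rw [dist_comm x' x]
                  exact max_le hx'.le (max_le le_rfl hy'.le)
          have h2 : dist x y ≤ dist x' y := by
            by_contra hlt
            push_neg at hlt
            exact lt_irrefl _ (lt_of_le_of_lt (hult x y x') (max_lt hx' hlt))
          have h3 : dist x y ≤ dist x' y' := by
            by_contra hlt
            push_neg at hlt
            have : dist x' y < dist x y :=
              lt_of_le_of_lt (hult x' y y')
                (max_lt hlt (by rw [dist_comm]; exact hy'))
            linarith
          linarith
      exact Set.Countable.mono hsub ((hScount.image2 hScount _).insert 0)
  · rintro ⟨h0, hcount⟩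
    haveI : Countable ↥A := hcount.to_subtype
    refine ⟨↥A, ultraMetricOn A hA, ⟨⟨0, h0⟩⟩, inferInstance, ?_, ?_⟩
    · intro x y z
      exact umDist_ultra x y z hA
    · ext r
      constructor
      · rintro ⟨x, y, rfl⟩
        show umDist A x y ∈ A
        unfold umDist
        split
        · exact h0
        · rcases max_choice x.1 y.1 with h | h <;> rw [h]
          · exact x.2
          · exact y.2
      · intro hr
        by_cases hr0 : r = 0
        · refine ⟨⟨0, h0⟩, ⟨0, h0⟩, ?_⟩
          show umDist A _ _ = r
          simp [umDist, hr0]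
        · refine ⟨⟨r, hr⟩, ⟨0, h0⟩, ?_⟩
          have hne : (⟨r, hr⟩ : ↥A) ≠ ⟨0, h0⟩ := by
            simp [Subtype.ext_iff, hr0]
          show umDist A _ _ = r
          rw [show umDist A ⟨r,hr⟩ ⟨0,h0⟩ = max r 0 from if_neg hne]
          exact max_eq_left (hA hr)
end

section
/- (Forward direction) Let (X,d) be an unbounded ultrametric space and let d* > 0; define ρ(x,y) = d*·d(x,y)/(1+d(x,y)). Then ρ is an ultrametric on X, the space (X,ρ) is bounded with diam(X,ρ) = d* (i.e., sup{ρ(x,y) : x,y ∈ X} = d*), and ρ(x,y) < d* for all x,y ∈ X (the diametrical graph of (X,ρ) is empty). (Converse direction) Let (X,ρ) be a bounded ultrametric space with at least two points such that ρ(x,y) < diam(X,ρ) for all x,y ∈ X, and set d* = diam(X,ρ). Then there exists an unbounded ultrametric d on X such that ρ(x,y) = d*·d(x,y)/(1+d(x,y)) for all x,y ∈ X. -/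
/-- `d` is an ultrametric on `X`: nonnegative, symmetric, vanishing exactly on
the diagonal and satisfying the strong triangle inequality. -/
def IsUltrametricFn {X : Type*} (d : X → X → ℝ) : Prop :=
  (∀ x y, 0 ≤ d x y) ∧ (∀ x y, d x y = d y x) ∧ (∀ x y, d x y = 0 ↔ x = y) ∧
    (∀ x y z, d x y ≤ max (d x z) (d z y))

private lemma mono_aux {a b : ℝ} (ha : 0 ≤ a) (hb : 0 ≤ b) (hab : a ≤ b) :
    a / (1 + a) ≤ b / (1 + b) := by
  rw [div_le_div_iff₀ (by linarith) (by linarith)]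
  nlinarith

private lemma mono_aux2 {c s t : ℝ} (hs : 0 ≤ s) (ht : t < c) (hst : s ≤ t) :
    s / (c - s) ≤ t / (c - t) := by
  rw [div_le_div_iff₀ (by linarith) (by linarith)]
  nlinarith

/-- (Forward direction) If `(X,d)` is an unbounded ultrametric space and
`d* > 0`, then `ρ(x,y) = d*·d(x,y)/(1+d(x,y))` is a bounded ultrametric with
`sup ρ = d*` and `ρ < d*` everywhere (empty diametrical graph).
(Converse direction) Every bounded ultrametric space `(X,ρ)` with at least two
points whose diametrical graph is empty arises in this way from an unbounded
ultrametric `d` on `X`. -/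
theorem bounded_ultrametric_with_empty_diametrical_graph :
    (∀ (X : Type) (d : X → X → ℝ), IsUltrametricFn d →
      (¬ ∃ M : ℝ, ∀ x y : X, d x y ≤ M) →
      ∀ dstar : ℝ, 0 < dstar →
        IsUltrametricFn (fun x y : X => dstar * d x y / (1 + d x y)) ∧
        IsLUB {s : ℝ | ∃ x y : X, dstar * d x y / (1 + d x y) = s} dstar ∧
        (∀ x y : X, dstar * d x y / (1 + d x y) < dstar)) ∧
    (∀ (X : Type) (ρ : X → X → ℝ), IsUltrametricFn ρ →
      (∃ a b : X, a ≠ b) →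
      (∃ M : ℝ, ∀ x y : X, ρ x y ≤ M) →
      (∀ x y : X, ρ x y < sSup {s : ℝ | ∃ a b : X, ρ a b = s}) →
      ∃ d : X → X → ℝ, IsUltrametricFn d ∧
        (¬ ∃ M : ℝ, ∀ x y : X, d x y ≤ M) ∧
        ∀ x y : X, ρ x y =
          sSup {s : ℝ | ∃ a b : X, ρ a b = s} * d x y / (1 + d x y)) := by
  constructor
  · intro X d hd hub dstar hds
    obtain ⟨hnn, hsymm, hzero, htri⟩ := hd
    push_neg at hub
    have hlt : ∀ x y : X, dstar * d x y / (1 + d x y) < dstar := by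
      intro x y
      have h1 : (0:ℝ) < 1 + d x y := by linarith [hnn x y]
      rw [div_lt_iff₀ h1]
      nlinarith [hnn x y]
    have key : ∀ x y : X, dstar * d x y / (1 + d x y)
        = dstar * (d x y / (1 + d x y)) := by
      intro x y; ring
    refine ⟨⟨?_, ?_, ?_, ?_⟩, ⟨?_, ?_⟩, hlt⟩
    · intro x y
      dsimp only
      have h1 : (0:ℝ) < 1 + d x y := by linarith [hnn x y]
      exact div_nonneg (mul_nonneg hds.le (hnn x y)) h1.le
    · intro x y
      dsimp only
      rw [hsymm x y]
    · intro x y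
      dsimp only
      have h1 : (0:ℝ) < 1 + d x y := by linarith [hnn x y]
      constructor
      · intro h
        have := (div_eq_zero_iff).1 h
        rcases this with h' | h'
        · rcases mul_eq_zero.1 h' with h'' | h''
          · exact absurd h'' (ne_of_gt hds)
          · exact (hzero x y).1 h''
        · linarith
      · intro h
        subst h
        simp [(hzero x x).2 rfl]
    · intro x y z
      have h := htri x y z
      rcases le_total (d x z) (d z y) with hle | hle
      · have : d x y ≤ d z y := by rw [max_eq_right hle] at h; exact h
        have := mono_aux (hnn x y) (hnn z y) this
        have h2 : dstar * d x y / (1 + d x y) ≤ dstar * d z y / (1 + d z y) := by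
          rw [key, key]
          exact mul_le_mul_of_nonneg_left this (le_of_lt hds)
        exact le_max_of_le_right h2
      · have : d x y ≤ d x z := by rw [max_eq_left hle] at h; exact h
        have := mono_aux (hnn x y) (hnn x z) this
        have h2 : dstar * d x y / (1 + d x y) ≤ dstar * d x z / (1 + d x z) := by
          rw [key, key]
          exact mul_le_mul_of_nonneg_left this (le_of_lt hds)
        exact le_max_of_le_left h2
    · -- upper bound
      rintro s ⟨x, y, rfl⟩
      exact le_of_lt (hlt x y)
    · -- least upper bound
      rintro b hb
      by_contra hbd
      push_neg at hbd
      -- b < dstar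
      obtain ⟨x0, y0, hx0⟩ := hub 0
      have hb0 : 0 ≤ b := by
        have : dstar * d x0 x0 / (1 + d x0 x0) ∈
            {s : ℝ | ∃ x y : X, dstar * d x y / (1 + d x y) = s} := ⟨x0, x0, rfl⟩
        have h0 := hb this
        have hd0 : d x0 x0 = 0 := (hzero x0 x0).2 rfl
        rw [hd0] at h0
        simpa using h0
      obtain ⟨x, y, hxy⟩ := hub (b / (dstar - b))
      have ht : 0 ≤ d x y := hnn x y
      have h1 : (0:ℝ) < 1 + d x y := by linarith
      have hgt : b < dstar * d x y / (1 + d x y) := by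
        rw [lt_div_iff₀ h1]
        have h2 : b / (dstar - b) < d x y := hxy
        have h3 : b < d x y * (dstar - b) := by
          rw [div_lt_iff₀ (by linarith)] at h2
          linarith
        nlinarith
      have := hb ⟨x, y, rfl⟩
      linarith
  · intro X ρ hρ ⟨a, b, hab⟩ ⟨M, hM⟩ hdiag
    obtain ⟨hnn, hsymm, hzero, htri⟩ := hρ
    set c := sSup {s : ℝ | ∃ a b : X, ρ a b = s} with hc
    have hSne : {s : ℝ | ∃ a b : X, ρ a b = s}.Nonempty := ⟨ρ a b, a, b, rfl⟩
    have hSbdd : BddAbove {s : ℝ | ∃ a b : X, ρ a b = s} := by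
      refine ⟨M, ?_⟩
      rintro s ⟨x, y, rfl⟩
      exact hM x y
    have hρab : 0 < ρ a b := by
      rcases lt_or_eq_of_le (hnn a b) with h | h
      · exact h
      · exact absurd ((hzero a b).1 h.symm) hab
    have hcpos : 0 < c := lt_of_lt_of_le hρab (le_csSup hSbdd ⟨a, b, rfl⟩)
    have hlt : ∀ x y : X, ρ x y < c := hdiag
    refine ⟨fun x y => ρ x y / (c - ρ x y), ⟨?_, ?_, ?_, ?_⟩, ?_, ?_⟩
    · intro x y
      dsimp only
      exact div_nonneg (hnn x y) (by linarith [hlt x y])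
    · intro x y; dsimp only; rw [hsymm x y]
    · intro x y
      dsimp only
      have hpos : 0 < c - ρ x y := by linarith [hlt x y]
      constructor
      · intro h
        rcases div_eq_zero_iff.1 h with h' | h'
        · exact (hzero x y).1 h'
        · linarith
      · intro h; subst h; rw [(hzero x x).2 rfl]; simp
    · intro x y z
      have h := htri x y z
      rcases le_total (ρ x z) (ρ z y) with hle | hle
      · have h' : ρ x y ≤ ρ z y := by rw [max_eq_right hle] at h; exact h
        exact le_max_of_le_right (mono_aux2 (hnn x y) (hlt z y) h')
      · have h' : ρ x y ≤ ρ x z := by rw [max_eq_left hle] at h; exact h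
        exact le_max_of_le_left (mono_aux2 (hnn x y) (hlt x z) h')
    · -- unbounded
      rintro ⟨N, hN⟩
      -- WLOG N ≥ 0
      have hN0 : 0 ≤ N := by
        have := hN a b
        have h1 : 0 < c - ρ a b := by linarith [hlt a b]
        have : 0 < ρ a b / (c - ρ a b) := div_pos hρab h1
        linarith [hN a b]
      -- find ρ x y > N*c/(1+N)
      have hlt' : N * c / (1 + N) < c := by
        rw [div_lt_iff₀ (by linarith)]
        nlinarith
      obtain ⟨s, ⟨x, y, rfl⟩, hs⟩ := exists_lt_of_lt_csSup hSne hlt'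
      have h1 : 0 < c - ρ x y := by linarith [hlt x y]
      have h2 : N * c < ρ x y * (1 + N) := by
        rw [div_lt_iff₀ (by linarith)] at hs
        linarith
      have : N < ρ x y / (c - ρ x y) := by
        rw [lt_div_iff₀ h1]
        nlinarith
      linarith [hN x y]
    · intro x y
      have h1 : (0:ℝ) < c - ρ x y := by linarith [hlt x y]
      have h2 : 1 + ρ x y / (c - ρ x y) = c / (c - ρ x y) := by
        field_simp
        ring
      dsimp only
      rw [h2]
      field_simp
end

section
/- Let (X,d) be a totally bounded ultrametric space, let c ∈ X and r > 0. Then the open ball B_r(c) = {x : d(x,c) < r} coincides with the closed ball of radius equal to its own diameter: B_r(c) = {x : d(x,c) ≤ diam B_r(c)}. In particular, every open ball of a totally bounded ultrametric space is a closed ball. -/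
/-- In a totally bounded ultrametric space, every open ball coincides with the
closed ball (around the same center) of radius its own diameter; in
particular, every open ball is a closed ball. -/
theorem open_ball_eq_closed_ball {X : Type*} [MetricSpace X]
    (hu : ∀ x y z : X, dist x y ≤ max (dist x z) (dist z y))
    (htb : TotallyBounded (Set.univ : Set X)) :
    (∀ (c : X) (r : ℝ), 0 < r →
      Metric.ball c r = Metric.closedBall c (Metric.diam (Metric.ball c r))) ∧
    (∀ (c : X) (r : ℝ), 0 < r →
      ∃ (c' : X) (r' : ℝ), 0 ≤ r' ∧ Metric.ball c r = Metric.closedBall c' r') := by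
  have key : ∀ (c : X) (r : ℝ), 0 < r →
      ∃ s, 0 ≤ s ∧ s < r ∧ ∀ x ∈ Metric.ball c r, dist x c ≤ s := by
    intro c r hr
    classical
    obtain ⟨t, ht, hcov⟩ := (Metric.totallyBounded_iff.mp htb) (r/2) (by positivity)
    set g : X → ℝ := fun z =>
      if h : (Metric.ball z (r/2) ∩ Metric.ball c r).Nonempty then dist h.choose c
      else r/2 with hg
    set S : Set ℝ := insert (r/2) (g '' t) with hS
    have hSfin : S.Finite := (ht.image g).insert _
    have hSne : S.Nonempty := ⟨r/2, Set.mem_insert _ _⟩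
    have hbdd : BddAbove S := hSfin.bddAbove
    set s := sSup S with hs
    have hmem : s ∈ S := hSne.csSup_mem hSfin
    have hlt : ∀ a ∈ S, a < r := by
      intro a ha
      rcases ha with rfl | ⟨z, hz, rfl⟩
      · linarith
      · by_cases h : (Metric.ball z (r/2) ∩ Metric.ball c r).Nonempty
        · simp only [hg, dif_pos h]
          have := h.choose_spec.2
          simpa [Metric.mem_ball] using this
        · simp only [hg, dif_neg h]; linarith
    have hsr : s < r := hlt s hmem
    have hhalf : r/2 ≤ s := le_csSup hbdd (Set.mem_insert _ _)
    refine ⟨s, by linarith, hsr, ?_⟩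
    intro x hx
    have hxu : x ∈ ⋃ y ∈ t, Metric.ball y (r/2) := hcov (Set.mem_univ x)
    obtain ⟨z, hz, hxz⟩ := Set.mem_iUnion₂.mp hxu
    have hne : (Metric.ball z (r/2) ∩ Metric.ball c r).Nonempty := ⟨x, hxz, hx⟩
    have hy1 : hne.choose ∈ Metric.ball z (r/2) := hne.choose_spec.1
    have hxy : dist x hne.choose ≤ max (dist x z) (dist z hne.choose) := hu x hne.choose z
    have hxy2 : dist x hne.choose < r/2 :=
      lt_of_le_of_lt hxy (max_lt (by simpa [Metric.mem_ball] using hxz)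
        (by rw [dist_comm]; simpa [Metric.mem_ball] using hy1))
    have hgz : g z ≤ s := le_csSup hbdd (Set.mem_insert_of_mem _ ⟨z, hz, rfl⟩)
    have hgz' : dist hne.choose c ≤ s := by
      have hgeq : g z = dist hne.choose c := by rw [hg]; simp only [dif_pos hne]
      rw [← hgeq]; exact hgz
    calc dist x c ≤ max (dist x hne.choose) (dist hne.choose c) := hu x c hne.choose
      _ ≤ s := max_le (by linarith) hgz'
  have part1 : ∀ (c : X) (r : ℝ), 0 < r →
      Metric.ball c r = Metric.closedBall c (Metric.diam (Metric.ball c r)) := by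
    intro c r hr
    obtain ⟨s, hs0, hsr, hball⟩ := key c r hr
    have hdiam_le : Metric.diam (Metric.ball c r) ≤ s := by
      apply Metric.diam_le_of_forall_dist_le hs0
      intro x hx y hy
      calc dist x y ≤ max (dist x c) (dist c y) := hu x y c
        _ ≤ s := max_le (hball x hx) (by rw [dist_comm]; exact hball y hy)
    ext x
    simp only [Metric.mem_ball, Metric.mem_closedBall]
    constructor
    · intro hx
      exact Metric.dist_le_diam_of_mem Metric.isBounded_ball (Metric.mem_ball.mpr hx)
        (Metric.mem_ball_self hr)
    · intro hx
      linarith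
  exact ⟨part1, fun c r hr =>
    ⟨c, Metric.diam (Metric.ball c r), Metric.diam_nonneg, part1 c r hr⟩⟩
end

section
/- Let (X,d) be a totally bounded ultrametric space. Then every closed ball of X is an open ball of X — i.e., for every c ∈ X and every r ≥ 0 there exist c' ∈ X and r' > 0 with {x : d(x,c) ≤ r} = {x : d(x,c') < r'} — if and only if every point of X is isolated (the topology of X is discrete). Combined with the fact that every open ball of such a space is a closed ball, this says that the set of open balls equals the set of closed balls exactly when X is discrete. -/
/-- A totally bounded space has no infinite δ-separated sequence. -/
lemma aux_sep {X : Type*} [MetricSpace X]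
    (htb : TotallyBounded (Set.univ : Set X)) {δ : ℝ} (hδ : 0 < δ)
    (f : ℕ → X) (hf : ∀ n m : ℕ, n < m → δ ≤ dist (f n) (f m)) : False := by
  obtain ⟨t, htf, hcov⟩ := (Metric.totallyBounded_iff.mp htb) (δ/2) (by linarith)
  have hchoice : ∀ n : ℕ, ∃ y ∈ t, f n ∈ Metric.ball y (δ/2) := by
    intro n
    have := hcov (Set.mem_univ (f n))
    simpa using this
  choose y hy1 hy2 using hchoice
  haveI : Finite t := htf
  obtain ⟨n, m, hnm, heq⟩ :=
    Finite.exists_ne_map_eq_of_infinite (fun n : ℕ => (⟨y n, hy1 n⟩ : t))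
  have heq' : y n = y m := congrArg Subtype.val heq
  rcases hnm.lt_or_gt with h | h
  · have h1 : dist (f n) (f m) ≤ dist (f n) (y n) + dist (y n) (f m) := dist_triangle _ _ _
    have h2 : dist (f n) (y n) < δ/2 := hy2 n
    have h3 : dist (y n) (f m) < δ/2 := by
      rw [dist_comm, heq']; exact hy2 m
    have := hf n m h
    linarith
  · have h1 : dist (f m) (f n) ≤ dist (f m) (y m) + dist (y m) (f n) := dist_triangle _ _ _
    have h2 : dist (f m) (y m) < δ/2 := hy2 m
    have h3 : dist (y m) (f n) < δ/2 := by
      rw [dist_comm, ← heq']; exact hy2 n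
    have := hf m n h
    linarith

/-- Gap above: in a totally bounded ultrametric space, distances to a fixed
point do not accumulate at `r > 0` from above. -/
lemma aux_gap_above {X : Type*} [MetricSpace X]
    (hu : ∀ x y z : X, dist x y ≤ max (dist x z) (dist z y))
    (htb : TotallyBounded (Set.univ : Set X)) (c : X) {r : ℝ} (hr : 0 < r) :
    ∃ r' > r, ∀ x : X, dist x c < r' → dist x c ≤ r := by
  by_contra hcon
  push_neg at hcon
  -- hcon : ∀ r' > r, ∃ x, dist x c < r' ∧ r < dist x c
  have h' : ∀ s : ℝ, ∃ x : X, r < s → dist x c < s ∧ r < dist x c := by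
    intro s
    by_cases hs : r < s
    · obtain ⟨x, hx1, hx2⟩ := hcon s hs
      exact ⟨x, fun _ => ⟨hx1, hx2⟩⟩
    · exact ⟨c, fun hs' => absurd hs' hs⟩
  choose g hg using h'
  let f : ℕ → X := fun n => Nat.rec (g (r+1)) (fun _ x => g (dist x c)) n
  have hbig : ∀ n, r < dist (f n) c := by
    intro n
    induction n with
    | zero => exact (hg (r+1) (by linarith)).2
    | succ k ih => exact (hg (dist (f k) c) ih).2
  have hdec : ∀ n, dist (f (n+1)) c < dist (f n) c := by
    intro n
    exact (hg (dist (f n) c) (hbig n)).1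
  have hanti : StrictAnti (fun n => dist (f n) c) := strictAnti_nat_of_succ_lt hdec
  refine aux_sep htb hr f ?_
  intro n m hnm
  have hlt : dist (f m) c < dist (f n) c := hanti hnm
  have := hu (f n) c (f m)
  have hle : dist (f n) c ≤ dist (f n) (f m) := by
    rcases max_cases (dist (f n) (f m)) (dist (f m) c) with ⟨he, _⟩ | ⟨he, _⟩
    · rw [he] at this; exact this
    · rw [he] at this; linarith
  linarith [hbig n]

/-- Gap below: in a totally bounded ultrametric space, every open ball of
positive radius is a closed ball. -/
lemma aux_gap_below {X : Type*} [MetricSpace X]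
    (hu : ∀ x y z : X, dist x y ≤ max (dist x z) (dist z y))
    (htb : TotallyBounded (Set.univ : Set X)) (c : X) {r : ℝ} (hr : 0 < r) :
    ∃ s : ℝ, 0 ≤ s ∧ Metric.ball c r = Metric.closedBall c s := by
  by_cases hb : ∀ x : X, dist x c < r → x = c
  · refine ⟨0, le_rfl, ?_⟩
    rw [Metric.closedBall_zero]
    ext x
    simp only [Metric.mem_ball, Set.mem_singleton_iff]
    constructor
    · intro hx; exact hb x hx
    · rintro rfl; simpa using hr
  · push_neg at hb
    obtain ⟨x0, hx0r, hx0c⟩ := hb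
    have hd0 : 0 < dist x0 c := dist_pos.mpr hx0c
    by_contra hcon
    push_neg at hcon
    have hcon' : ∀ s : ℝ, 0 ≤ s → s < r → ∃ x : X, dist x c < r ∧ s < dist x c := by
      intro s hs0 hsr
      by_contra h
      push_neg at h
      refine absurd (hcon s hs0) (not_ne_iff.mpr ?_)
      ext x
      simp only [Metric.mem_ball, Metric.mem_closedBall]
      exact ⟨fun hx => h x hx, fun hx => lt_of_le_of_lt hx hsr⟩
    have h' : ∀ s : ℝ, ∃ x : X, 0 ≤ s → s < r → dist x c < r ∧ s < dist x c := by
      intro s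
      by_cases hs : 0 ≤ s ∧ s < r
      · obtain ⟨x, hx⟩ := hcon' s hs.1 hs.2
        exact ⟨x, fun _ _ => hx⟩
      · refine ⟨c, fun h1 h2 => absurd ⟨h1, h2⟩ hs⟩
    choose g hg using h'
    let f : ℕ → X := fun n => Nat.rec x0 (fun _ x => g (dist x c)) n
    have hkey : ∀ n, dist (f n) c < r ∧ dist (f n) c ≤ dist (f (n+1)) c ∧
        dist (f n) c < dist (f (n+1)) c := by
      intro n
      induction n with
      | zero =>
        have h := hg (dist x0 c) hd0.le hx0r
        exact ⟨hx0r, h.2.le, h.2⟩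
      | succ k ih =>
        have hlt : dist (f (k+1)) c < r := by
          have h := hg (dist (f k) c) (dist_nonneg) ih.1
          exact h.1
        have hpos : 0 ≤ dist (f (k+1)) c := dist_nonneg
        have h := hg (dist (f (k+1)) c) hpos hlt
        exact ⟨hlt, h.2.le, h.2⟩
    have hmono : StrictMono (fun n => dist (f n) c) :=
      strictMono_nat_of_lt_succ (fun n => (hkey n).2.2)
    refine aux_sep htb hd0 f ?_
    intro n m hnm
    have hlt : dist (f n) c < dist (f m) c := hmono hnm
    have := hu (f m) c (f n)
    have hle : dist (f m) c ≤ dist (f m) (f n) := by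
      rcases max_cases (dist (f m) (f n)) (dist (f n) c) with ⟨he, _⟩ | ⟨he, _⟩
      · rw [he] at this; exact this
      · rw [he] at this; linarith
    have hge : dist x0 c ≤ dist (f n) c := by
      have : ∀ k, dist (f 0) c ≤ dist (f k) c := fun k => hmono.monotone (Nat.zero_le k)
      exact this n
    rw [dist_comm (f n) (f m)]
    linarith

/-- In a totally bounded ultrametric space, every closed ball is an open ball
iff every point is isolated; equivalently, the set of open balls equals the
set of closed balls exactly when the space is discrete. -/
theorem closed_balls_eq_open_balls_iff_discrete {X : Type*} [MetricSpace X]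
    (hu : ∀ x y z : X, dist x y ≤ max (dist x z) (dist z y))
    (htb : TotallyBounded (Set.univ : Set X)) :
    ((∀ (c : X) (r : ℝ), 0 ≤ r →
        ∃ (c' : X) (r' : ℝ), 0 < r' ∧ Metric.closedBall c r = Metric.ball c' r') ↔
      (∀ p : X, IsOpen ({p} : Set X))) ∧
    (({B : Set X | ∃ (c : X) (r : ℝ), 0 < r ∧ B = Metric.ball c r} =
        {B : Set X | ∃ (c : X) (r : ℝ), 0 ≤ r ∧ B = Metric.closedBall c r}) ↔
      (∀ p : X, IsOpen ({p} : Set X))) := by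
  have h1 : (∀ (c : X) (r : ℝ), 0 ≤ r →
      ∃ (c' : X) (r' : ℝ), 0 < r' ∧ Metric.closedBall c r = Metric.ball c' r') ↔
      (∀ p : X, IsOpen ({p} : Set X)) := by
    constructor
    · intro h p
      obtain ⟨c', r', hr', heq⟩ := h p 0 le_rfl
      rw [Metric.closedBall_zero] at heq
      rw [heq]
      exact Metric.isOpen_ball
    · intro hd c r hr
      rcases eq_or_lt_of_le hr with hr0 | hr0
      · -- r = 0
      -- {c} is open, so it is an open ball
        obtain ⟨ε, hε, hball⟩ := Metric.isOpen_iff.mp (hd c) c rfl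
        refine ⟨c, ε, hε, ?_⟩
        rw [← hr0, Metric.closedBall_zero]
        apply Set.Subset.antisymm
        · intro x hx
          rw [Set.mem_singleton_iff] at hx
          subst hx
          exact Metric.mem_ball_self hε
        · exact hball
      · obtain ⟨r', hr', hgap⟩ := aux_gap_above hu htb c hr0
        refine ⟨c, r', lt_trans hr0 hr', ?_⟩
        ext x
        simp only [Metric.mem_closedBall, Metric.mem_ball]
        exact ⟨fun hx => lt_of_le_of_lt hx hr', fun hx => hgap x hx⟩
  refine ⟨h1, ?_⟩
  constructor
  · intro hset p
    have hmem : ({p} : Set X) ∈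
        {B : Set X | ∃ (c : X) (r : ℝ), 0 ≤ r ∧ B = Metric.closedBall c r} :=
      ⟨p, 0, le_rfl, (Metric.closedBall_zero).symm⟩
    rw [← hset] at hmem
    obtain ⟨c, r, hr, heq⟩ := hmem
    rw [heq]
    exact Metric.isOpen_ball
  · intro hd
    ext B
    simp only [Set.mem_setOf_eq]
    constructor
    · rintro ⟨c, r, hr, rfl⟩
      obtain ⟨s, hs0, hseq⟩ := aux_gap_below hu htb c hr
      exact ⟨c, s, hs0, hseq⟩
    · rintro ⟨c, r, hr, rfl⟩
      obtain ⟨c', r', hr', heq⟩ := h1.mpr hd c r hr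
      exact ⟨c', r', hr', heq⟩
end

section
/- Let (X,d) be a nonempty ultrametric space and let Y ⊆ X be dense. Denote by 𝐁_X = {B : Set X | ∃ c ∈ X, ∃ r > 0, B = {x : d(x,c) < r}} the family of open balls of X and by 𝐁_Y = {A : Set X | ∃ c ∈ Y, ∃ r > 0, A = {y ∈ Y : d(y,c) < r}} the family of open balls of the subspace Y (viewed as subsets of X contained in Y). Then: (1) for every B ∈ 𝐁_X the set B ∩ Y belongs to 𝐁_Y; (2) the map Φ(B) = B ∩ Y is a bijection from 𝐁_X onto 𝐁_Y satisfying B₁ ⊆ B₂ ⟺ Φ(B₁) ⊆ Φ(B₂) for all B₁, B₂ ∈ 𝐁_X (an order isomorphism of the balleans ordered by inclusion); (3) diam(B ∩ Y) = diam B for every B ∈ 𝐁_X. -/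
/-- The ballean (family of all open balls) of a metric space. -/
def openBallean (X : Type*) [MetricSpace X] : Set (Set X) :=
  {B | ∃ c : X, ∃ r : ℝ, 0 < r ∧ B = Metric.ball c r}

/-- The family of all open balls of the subspace `Y` of `X`, viewed as subsets
of `X` contained in `Y`. -/
def subspaceBallean {X : Type*} [MetricSpace X] (Y : Set X) : Set (Set X) :=
  {A | ∃ c ∈ Y, ∃ r : ℝ, 0 < r ∧ A = {y ∈ Y | dist y c < r}}

/-- For a dense subset `Y` of a nonempty ultrametric space `X`, intersecting
with `Y` maps open balls of `X` to open balls of `Y`, this map is an order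
isomorphism of the balleans (ordered by inclusion), and it preserves
diameters. -/
theorem ballean_of_dense_subset {X : Type*} [MetricSpace X] [Nonempty X]
    (hu : ∀ x y z : X, dist x y ≤ max (dist x z) (dist z y))
    (Y : Set X) (hY : Dense Y) :
    (∀ B ∈ openBallean X, B ∩ Y ∈ subspaceBallean Y) ∧
    Set.BijOn (fun B => B ∩ Y) (openBallean X) (subspaceBallean Y) ∧
    (∀ B₁ ∈ openBallean X, ∀ B₂ ∈ openBallean X, (B₁ ⊆ B₂ ↔ B₁ ∩ Y ⊆ B₂ ∩ Y)) ∧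
    (∀ B ∈ openBallean X, Metric.diam (B ∩ Y) = Metric.diam B) := by
  -- recentering of balls in an ultrametric space
  have recenter : ∀ (c c' : X) (r : ℝ), dist c' c < r →
      Metric.ball c r = Metric.ball c' r := by
    intro c c' r h
    ext x
    simp only [Metric.mem_ball]
    constructor
    · intro hx
      calc dist x c' ≤ max (dist x c) (dist c c') := hu x c' c
        _ < r := max_lt hx (by rwa [dist_comm] at h)
    · intro hx
      calc dist x c ≤ max (dist x c') (dist c' c) := hu x c c'
        _ < r := max_lt hx h
  -- open balls are closed
  have hclosed : ∀ (c : X) (r : ℝ), 0 < r → IsClosed (Metric.ball c r) := by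
    intro c r hr
    rw [← isOpen_compl_iff, Metric.isOpen_iff]
    intro x hx
    refine ⟨r, hr, fun y hy => ?_⟩
    simp only [Set.mem_compl_iff, Metric.mem_ball] at *
    intro hy'
    exact hx (lt_of_le_of_lt (hu x c y) (max_lt (by rwa [dist_comm] at hy) hy'))
  -- key: closure (B ∩ Y) = B for B an open ball
  have key : ∀ B ∈ openBallean X, closure (B ∩ Y) = B := by
    rintro B ⟨c, r, hr, rfl⟩
    apply le_antisymm
    · calc closure (Metric.ball c r ∩ Y) ⊆ closure (Metric.ball c r) :=
            closure_mono Set.inter_subset_left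
        _ = Metric.ball c r := (hclosed c r hr).closure_eq
    · exact hY.open_subset_closure_inter Metric.isOpen_ball
  have hmaps : ∀ B ∈ openBallean X, B ∩ Y ∈ subspaceBallean Y := by
    rintro B ⟨c, r, hr, rfl⟩
    obtain ⟨c', hc'Y, hc'B⟩ := hY.exists_mem_open Metric.isOpen_ball
      ⟨c, Metric.mem_ball_self hr⟩
    refine ⟨c', hc'Y, r, hr, ?_⟩
    rw [recenter c c' r (Metric.mem_ball.mp hc'B)]
    ext x
    simp only [Set.mem_inter_iff, Metric.mem_ball, Set.mem_setOf_eq]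
    tauto
  have horder : ∀ B₁ ∈ openBallean X, ∀ B₂ ∈ openBallean X,
      (B₁ ⊆ B₂ ↔ B₁ ∩ Y ⊆ B₂ ∩ Y) := by
    intro B₁ h₁ B₂ h₂
    constructor
    · intro h
      exact Set.inter_subset_inter_left Y h
    · intro h
      rw [← key B₁ h₁, ← key B₂ h₂]
      exact closure_mono h
  refine ⟨hmaps, ⟨hmaps, ?_, ?_⟩, horder, ?_⟩
  · -- InjOn
    intro B₁ h₁ B₂ h₂ h
    simp only at h
    exact le_antisymm ((horder B₁ h₁ B₂ h₂).mpr h.le)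
      ((horder B₂ h₂ B₁ h₁).mpr h.ge)
  · -- SurjOn
    rintro A ⟨c, hcY, r, hr, rfl⟩
    refine ⟨Metric.ball c r, ⟨c, r, hr, rfl⟩, ?_⟩
    ext x
    simp only [Set.mem_inter_iff, Metric.mem_ball, Set.mem_setOf_eq]
    tauto
  · -- diam
    intro B hB
    conv_rhs => rw [← key B hB]
    exact (Metric.diam_closure _).symm
end

section
/- Let (X,d) be a nonempty ultrametric space, let c₁, c₂ ∈ X and r₁, r₂ ≥ 0, and suppose the closed balls B₁ = {x : d(x,c₁) ≤ r₁} and B₂ = {x : d(x,c₂) ≤ r₂} are distinct as sets. Then the Hausdorff distance between them equals the diameter of their union: d_H(B₁, B₂) = diam(B₁ ∪ B₂). -/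
open Metric Set

/-- Auxiliary: the case where the first ball is contained in the second. -/
theorem aux_hausdorff_sub {X : Type*} [MetricSpace X]
    (hu : ∀ x y z : X, dist x y ≤ max (dist x z) (dist z y))
    (c₁ c₂ : X) (r₁ r₂ : ℝ) (hr₁ : 0 ≤ r₁) (hr₂ : 0 ≤ r₂)
    (hsub : Metric.closedBall c₁ r₁ ⊆ Metric.closedBall c₂ r₂)
    (hne : Metric.closedBall c₁ r₁ ≠ Metric.closedBall c₂ r₂) :
    Metric.hausdorffDist (Metric.closedBall c₁ r₁) (Metric.closedBall c₂ r₂) =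
      Metric.diam (Metric.closedBall c₁ r₁ ∪ Metric.closedBall c₂ r₂) := by
  have h1 : (closedBall c₁ r₁).Nonempty := nonempty_closedBall.mpr hr₁
  have h2 : (closedBall c₂ r₂).Nonempty := nonempty_closedBall.mpr hr₂
  have hb1 : Bornology.IsBounded (closedBall c₁ r₁) := isBounded_closedBall
  have hb2 : Bornology.IsBounded (closedBall c₂ r₂) := isBounded_closedBall
  have hfin : EMetric.hausdorffEdist (closedBall c₁ r₁) (closedBall c₂ r₂) ≠ ⊤ :=
    hausdorffEdist_ne_top_of_nonempty_of_bounded h1 h2 hb1 hb2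
  obtain ⟨b₀, hb₀2, hb₀1⟩ : ∃ b, b ∈ closedBall c₂ r₂ ∧ b ∉ closedBall c₁ r₁ := by
    by_contra h
    push_neg at h
    exact hne (le_antisymm hsub h)
  set H := hausdorffDist (closedBall c₁ r₁) (closedBall c₂ r₂) with hH
  -- points of B₂ outside B₁ have distance to c₁ bounded by H
  have key : ∀ z, z ∈ closedBall c₂ r₂ → z ∉ closedBall c₁ r₁ → dist z c₁ ≤ H := by
    intro z hz2 hz1
    have hlt : r₁ < dist z c₁ := not_le.mp (by simpa [mem_closedBall] using hz1)
    have h3 : dist z c₁ ≤ infDist z (closedBall c₁ r₁) := by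
      by_contra hc
      rcases (infDist_lt_iff h1).mp (not_le.mp hc) with ⟨a, ha, hda⟩
      have h4 : dist z c₁ ≤ max (dist z a) (dist a c₁) := hu z c₁ a
      have h5 : dist a c₁ < dist z c₁ := lt_of_le_of_lt (mem_closedBall.mp ha) hlt
      have h6 : dist z c₁ ≤ dist z a := (le_max_iff.mp h4).resolve_right (not_le.mpr h5)
      exact absurd (lt_of_le_of_lt h6 hda) (lt_irrefl _)
    calc dist z c₁ ≤ infDist z (closedBall c₁ r₁) := h3
      _ ≤ hausdorffDist (closedBall c₂ r₂) (closedBall c₁ r₁) :=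
          infDist_le_hausdorffDist_of_mem hz2 (by rwa [EMetric.hausdorffEdist_comm])
      _ = H := hausdorffDist_comm
  have hr₁H : r₁ < H := lt_of_lt_of_le
    (not_le.mp (by simpa [mem_closedBall] using hb₀1)) (key b₀ hb₀2 hb₀1)
  -- every point of B₂ has distance to c₁ bounded by H
  have key2 : ∀ z, z ∈ closedBall c₂ r₂ → dist z c₁ ≤ H := by
    intro z hz2
    by_cases hz1 : z ∈ closedBall c₁ r₁
    · exact le_of_lt (lt_of_le_of_lt (mem_closedBall.mp hz1) hr₁H)
    · exact key z hz2 hz1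
  have hdle : diam (closedBall c₁ r₁ ∪ closedBall c₂ r₂) ≤ H := by
    rw [union_eq_self_of_subset_left hsub]
    refine diam_le_of_forall_dist_le hausdorffDist_nonneg ?_
    intro x hx y hy
    calc dist x y ≤ max (dist x c₁) (dist c₁ y) := hu x y c₁
      _ ≤ H := max_le (key2 x hx) (by rw [dist_comm]; exact key2 y hy)
  exact le_antisymm (hausdorffDist_le_diam h1 hb1 h2 hb2) hdle

/-- In a nonempty ultrametric space, the Hausdorff distance between two
distinct closed balls equals the diameter of their union. -/
theorem hausdorffDist_closedBalls_eq_diam_union {X : Type*} [MetricSpace X]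
    [Nonempty X]
    (hu : ∀ x y z : X, dist x y ≤ max (dist x z) (dist z y))
    (c₁ c₂ : X) (r₁ r₂ : ℝ) (hr₁ : 0 ≤ r₁) (hr₂ : 0 ≤ r₂)
    (hne : Metric.closedBall c₁ r₁ ≠ Metric.closedBall c₂ r₂) :
    Metric.hausdorffDist (Metric.closedBall c₁ r₁) (Metric.closedBall c₂ r₂) =
      Metric.diam (Metric.closedBall c₁ r₁ ∪ Metric.closedBall c₂ r₂) := by
  have h1 : (closedBall c₁ r₁).Nonempty := nonempty_closedBall.mpr hr₁
  have h2 : (closedBall c₂ r₂).Nonempty := nonempty_closedBall.mpr hr₂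
  have hb1 : Bornology.IsBounded (closedBall c₁ r₁) := isBounded_closedBall
  have hb2 : Bornology.IsBounded (closedBall c₂ r₂) := isBounded_closedBall
  have hfin : EMetric.hausdorffEdist (closedBall c₁ r₁) (closedBall c₂ r₂) ≠ ⊤ :=
    hausdorffEdist_ne_top_of_nonempty_of_bounded h1 h2 hb1 hb2
  by_cases hint : (closedBall c₁ r₁ ∩ closedBall c₂ r₂).Nonempty
  · obtain ⟨z, hz1, hz2⟩ := hint
    rcases le_total r₁ r₂ with hr | hr
    · -- B₁ ⊆ B₂
      have hsub : closedBall c₁ r₁ ⊆ closedBall c₂ r₂ := by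
        intro x hx
        have h3 : dist x z ≤ max (dist x c₁) (dist c₁ z) := hu x z c₁
        have h4 : dist x z ≤ r₁ :=
          h3.trans (max_le (mem_closedBall.mp hx) (by rw [dist_comm]; exact mem_closedBall.mp hz1))
        have h5 : dist x c₂ ≤ max (dist x z) (dist z c₂) := hu x c₂ z
        exact mem_closedBall.mpr (h5.trans (max_le (h4.trans hr) (mem_closedBall.mp hz2)))
      exact aux_hausdorff_sub hu c₁ c₂ r₁ r₂ hr₁ hr₂ hsub hne
    · -- B₂ ⊆ B₁
      have hsub : closedBall c₂ r₂ ⊆ closedBall c₁ r₁ := by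
        intro x hx
        have h3 : dist x z ≤ max (dist x c₂) (dist c₂ z) := hu x z c₂
        have h4 : dist x z ≤ r₂ :=
          h3.trans (max_le (mem_closedBall.mp hx) (by rw [dist_comm]; exact mem_closedBall.mp hz2))
        have h5 : dist x c₁ ≤ max (dist x z) (dist z c₁) := hu x c₁ z
        exact mem_closedBall.mpr (h5.trans (max_le (h4.trans hr) (mem_closedBall.mp hz1)))
      rw [hausdorffDist_comm, union_comm]
      exact aux_hausdorff_sub hu c₂ c₁ r₂ r₁ hr₂ hr₁ hsub hne.symm
  · -- disjoint balls
    set D := dist c₁ c₂ with hD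
    have hDgt : max r₁ r₂ < D := by
      by_contra h
      push_neg at h
      rcases le_max_iff.mp h with ha | hb
      · exact hint ⟨c₂, mem_closedBall.mpr (by rw [dist_comm]; exact ha),
          mem_closedBall.mpr (by simp [hr₂])⟩
      · exact hint ⟨c₁, mem_closedBall.mpr (by simp [hr₁]),
          mem_closedBall.mpr hb⟩
    have hr₁D : r₁ < D := lt_of_le_of_lt (le_max_left _ _) hDgt
    have hr₂D : r₂ < D := lt_of_le_of_lt (le_max_right _ _) hDgt
    -- all cross distances equal D
    have cross : ∀ a ∈ closedBall c₁ r₁, ∀ b ∈ closedBall c₂ r₂, dist a b = D := by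
      intro a ha b hb
      have ha' : dist a c₁ ≤ r₁ := mem_closedBall.mp ha
      have hb' : dist b c₂ ≤ r₂ := mem_closedBall.mp hb
      have h1' : dist a c₂ = D := by
        have hle : dist a c₂ ≤ max (dist a c₁) (dist c₁ c₂) := hu a c₂ c₁
        have hle' : dist a c₂ ≤ D := hle.trans (max_le (ha'.trans hr₁D.le) le_rfl)
        have hge : D ≤ max (dist c₁ a) (dist a c₂) := hu c₁ c₂ a
        have hge' : D ≤ dist a c₂ := (le_max_iff.mp hge).resolve_left
          (not_le.mpr (by rw [dist_comm]; exact lt_of_le_of_lt ha' hr₁D))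
        exact le_antisymm hle' hge'
      have hle : dist a b ≤ max (dist a c₂) (dist c₂ b) := hu a b c₂
      have hle' : dist a b ≤ D := hle.trans (max_le (h1'.le)
        (by rw [dist_comm]; exact hb'.trans hr₂D.le))
      have hge : dist a c₂ ≤ max (dist a b) (dist b c₂) := hu a c₂ b
      have hge' : D ≤ dist a b := by
        rw [← h1']
        exact (le_max_iff.mp hge).resolve_right
          (not_le.mpr (by rw [h1']; exact lt_of_le_of_lt hb' hr₂D))
      exact le_antisymm hle' hge'
    have hD0 : 0 ≤ D := dist_nonneg
    have hdiam : diam (closedBall c₁ r₁ ∪ closedBall c₂ r₂) ≤ D := by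
      refine diam_le_of_forall_dist_le hD0 ?_
      rintro x (hx | hx) y (hy | hy)
      · calc dist x y ≤ max (dist x c₁) (dist c₁ y) := hu x y c₁
          _ ≤ r₁ := max_le (mem_closedBall.mp hx) (by rw [dist_comm]; exact mem_closedBall.mp hy)
          _ ≤ D := hr₁D.le
      · exact (cross x hx y hy).le
      · rw [dist_comm]; exact (cross y hy x hx).le
      · calc dist x y ≤ max (dist x c₂) (dist c₂ y) := hu x y c₂
          _ ≤ r₂ := max_le (mem_closedBall.mp hx) (by rw [dist_comm]; exact mem_closedBall.mp hy)
          _ ≤ D := hr₂D.le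
    have hDle : D ≤ hausdorffDist (closedBall c₁ r₁) (closedBall c₂ r₂) := by
      have hc₁ : c₁ ∈ closedBall c₁ r₁ := mem_closedBall.mpr (by simp [hr₁])
      have hinf : D ≤ infDist c₁ (closedBall c₂ r₂) := by
        by_contra hc
        rcases (infDist_lt_iff h2).mp (not_le.mp hc) with ⟨b, hb, hdb⟩
        rw [cross c₁ hc₁ b hb] at hdb
        exact lt_irrefl _ hdb
      exact hinf.trans (infDist_le_hausdorffDist_of_mem hc₁ hfin)
    exact le_antisymm (hausdorffDist_le_diam h1 hb1 h2 hb2) (hdiam.trans hDle)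
end

section
/- Let (X,d) be a nonempty ultrametric space and let B₁, B₂, B₃ be closed balls of X (sets of the form {x : d(x,c) ≤ r} with c ∈ X and r ≥ 0). Then the Hausdorff distance satisfies the strong triangle inequality: d_H(B₁, B₂) ≤ max{d_H(B₁, B₃), d_H(B₃, B₂)}. Hence the set of all closed balls of X equipped with the Hausdorff distance is an ultrametric space. -/
open Metric

lemma infDist_le_max_aux {X : Type*} [MetricSpace X]
    (hu : ∀ x y z : X, dist x y ≤ max (dist x z) (dist z y))
    {B C : Set X} (hC : C.Nonempty) (hBC : EMetric.hausdorffEdist C B ≠ ⊤)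
    (a : X) :
    infDist a B ≤ max (infDist a C) (hausdorffDist C B) := by
  refine le_of_forall_pos_le_add fun ε hε => ?_
  obtain ⟨c, hc, hac⟩ := (infDist_lt_iff hC).mp
    (lt_add_of_pos_right (infDist a C) hε)
  have hB : B.Nonempty := EMetric.nonempty_of_hausdorffEdist_ne_top hC hBC
  have hcB : infDist c B ≤ hausdorffDist C B := infDist_le_hausdorffDist_of_mem hc hBC
  obtain ⟨b, hb, hcb⟩ := (infDist_lt_iff hB).mp
    (lt_of_le_of_lt hcB (lt_add_of_pos_right _ hε))
  calc infDist a B ≤ dist a b := infDist_le_dist_of_mem hb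
    _ ≤ max (dist a c) (dist c b) := hu a b c
    _ ≤ max (infDist a C + ε) (hausdorffDist C B + ε) :=
        max_le_max hac.le hcb.le
    _ = max (infDist a C) (hausdorffDist C B) + ε := max_add_add_right _ _ _

/-- In a nonempty ultrametric space, the Hausdorff distance satisfies the
strong triangle inequality on closed balls; hence the set of all closed balls
equipped with the Hausdorff distance is an ultrametric space. -/
theorem hausdorffDist_on_closedBalls_is_ultrametric {X : Type*} [MetricSpace X]
    [Nonempty X]
    (hu : ∀ x y z : X, dist x y ≤ max (dist x z) (dist z y))
    (c₁ c₂ c₃ : X) (r₁ r₂ r₃ : ℝ) (hr₁ : 0 ≤ r₁) (hr₂ : 0 ≤ r₂) (hr₃ : 0 ≤ r₃) :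
    Metric.hausdorffDist (Metric.closedBall c₁ r₁) (Metric.closedBall c₂ r₂) ≤
      max (Metric.hausdorffDist (Metric.closedBall c₁ r₁) (Metric.closedBall c₃ r₃))
        (Metric.hausdorffDist (Metric.closedBall c₃ r₃) (Metric.closedBall c₂ r₂)) := by
  set B₁ := Metric.closedBall c₁ r₁
  set B₂ := Metric.closedBall c₂ r₂
  set B₃ := Metric.closedBall c₃ r₃
  have h₁ : B₁.Nonempty := Metric.nonempty_closedBall.mpr hr₁
  have h₂ : B₂.Nonempty := Metric.nonempty_closedBall.mpr hr₂
  have h₃ : B₃.Nonempty := Metric.nonempty_closedBall.mpr hr₃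
  have b₁ : Bornology.IsBounded B₁ := Metric.isBounded_closedBall
  have b₂ : Bornology.IsBounded B₂ := Metric.isBounded_closedBall
  have b₃ : Bornology.IsBounded B₃ := Metric.isBounded_closedBall
  have e13 : EMetric.hausdorffEdist B₁ B₃ ≠ ⊤ :=
    Metric.hausdorffEdist_ne_top_of_nonempty_of_bounded h₁ h₃ b₁ b₃
  have e32 : EMetric.hausdorffEdist B₃ B₂ ≠ ⊤ :=
    Metric.hausdorffEdist_ne_top_of_nonempty_of_bounded h₃ h₂ b₃ b₂
  refine Metric.hausdorffDist_le_of_infDist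
    (le_max_of_le_left Metric.hausdorffDist_nonneg) (fun x hx => ?_) (fun x hx => ?_)
  · calc infDist x B₂ ≤ max (infDist x B₃) (hausdorffDist B₃ B₂) :=
        infDist_le_max_aux hu h₃ e32 x
      _ ≤ max (hausdorffDist B₁ B₃) (hausdorffDist B₃ B₂) :=
        max_le_max (infDist_le_hausdorffDist_of_mem hx e13) le_rfl
  · have e31 : EMetric.hausdorffEdist B₃ B₁ ≠ ⊤ := by
      rw [EMetric.hausdorffEdist, EMetric.hausdorffEdist_comm]; assumption
    have e23 : EMetric.hausdorffEdist B₂ B₃ ≠ ⊤ := by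
      rw [EMetric.hausdorffEdist, EMetric.hausdorffEdist_comm]; assumption
    calc infDist x B₁ ≤ max (infDist x B₃) (hausdorffDist B₃ B₁) :=
        infDist_le_max_aux hu h₃ e31 x
      _ ≤ max (hausdorffDist B₃ B₂) (hausdorffDist B₁ B₃) := by
        exact max_le_max
          ((infDist_le_hausdorffDist_of_mem hx e23).trans Metric.hausdorffDist_comm.le)
          Metric.hausdorffDist_comm.le
      _ = max (hausdorffDist B₁ B₃) (hausdorffDist B₃ B₂) := max_comm _ _
end

section
/- Let (X,d) be a totally bounded ultrametric space with distance set D(X) = {d(x,y) : x,y ∈ X}, and let 𝐁_X = {B : Set X | ∃ c ∈ X, ∃ r > 0, B = {x : d(x,c) < r}} be its ballean. Then: (1) 𝐁_X is at most countable; and (2) for every r ∈ D(X) with r > 0, the set 𝐁_X(r) = {B ∈ 𝐁_X : diam B = r} is finite and nonempty. -/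
open Metric Set

section Aux

variable {X : Type*} [MetricSpace X]

/-- Ultrametric isoceles principle: if `dist a c < dist a b` then `dist c b = dist a b`. -/
lemma ball_aux_isoc (hu : ∀ x y z : X, dist x y ≤ max (dist x z) (dist z y))
    {a b c : X} (h : dist a c < dist a b) : dist c b = dist a b := by
  have h1 : dist c b ≤ dist a b := by
    have := hu c b a
    rw [dist_comm c a] at this
    exact this.trans (max_le h.le le_rfl)
  have h2 := hu a b c
  refine le_antisymm h1 ?_
  by_contra hcon
  push_neg at hcon
  exact absurd (lt_of_le_of_lt h2 (max_lt h hcon)) (lt_irrefl _)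

/-- In a totally bounded ultrametric space, the set of realized distances `≥ ε` is finite. -/
lemma ball_aux_fin (hu : ∀ x y z : X, dist x y ≤ max (dist x z) (dist z y))
    (htb : TotallyBounded (Set.univ : Set X)) {ε : ℝ} (hε : 0 < ε) :
    Set.Finite {t : ℝ | ε ≤ t ∧ ∃ x y : X, dist x y = t} := by
  obtain ⟨s, hsfin, hscov⟩ := (totallyBounded_iff.mp htb) ε hε
  refine Set.Finite.subset (Set.Finite.image2 dist hsfin hsfin) ?_
  rintro t ⟨hεt, x, y, rfl⟩
  obtain ⟨cx, hcx, hx⟩ : ∃ c ∈ s, x ∈ ball c ε := by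
    simpa using hscov (mem_univ x)
  obtain ⟨cy, hcy, hy⟩ : ∃ c ∈ s, y ∈ ball c ε := by
    simpa using hscov (mem_univ y)
  rw [mem_ball] at hx hy
  have h1 : dist cy x = dist y x :=
    ball_aux_isoc hu (lt_of_lt_of_le hy (le_trans hεt (dist_comm x y ▸ le_rfl)))
  have h1' : dist x cy = dist x y := by
    rw [dist_comm x cy, dist_comm x y]; exact h1
  have h2 : dist cx cy = dist x cy :=
    ball_aux_isoc hu (lt_of_lt_of_le hx (h1' ▸ hεt))
  exact ⟨cx, hcx, cy, hcy, by rw [h2, h1']⟩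

/-- In a totally bounded ultrametric space, the diameter of a bounded set with positive
diameter is attained. -/
lemma ball_aux_diam_attained (hu : ∀ x y z : X, dist x y ≤ max (dist x z) (dist z y))
    (htb : TotallyBounded (Set.univ : Set X)) {S : Set X}
    (hb : Bornology.IsBounded S) (hpos : 0 < Metric.diam S) :
    ∃ x ∈ S, ∃ y ∈ S, dist x y = Metric.diam S := by
  set t := Metric.diam S with ht
  by_contra hcon
  push_neg at hcon
  have hFfin : Set.Finite {d : ℝ | t / 2 ≤ d ∧ ∃ x ∈ S, ∃ y ∈ S, dist x y = d} := by
    refine (ball_aux_fin hu htb (half_pos hpos)).subset ?_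
    rintro d ⟨hd, x, _, y, _, rfl⟩
    exact ⟨hd, x, y, rfl⟩
  by_cases hF : {d : ℝ | t / 2 ≤ d ∧ ∃ x ∈ S, ∃ y ∈ S, dist x y = d}.Nonempty
  · -- let m be the max of the finite nonempty set of large distances
    have hne : hFfin.toFinset.Nonempty := by
      rwa [Set.Finite.toFinset_nonempty]
    set m := hFfin.toFinset.max' hne with hm
    have hmmem : m ∈ {d : ℝ | t / 2 ≤ d ∧ ∃ x ∈ S, ∃ y ∈ S, dist x y = d} := by
      have := hFfin.toFinset.max'_mem hne
      rwa [Set.Finite.mem_toFinset] at this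
    obtain ⟨-, x, hx, y, hy, hxy⟩ := hmmem
    have hmlt : m < t := by
      rcases lt_or_eq_of_le (hxy ▸ Metric.dist_le_diam_of_mem hb hx hy) with h | h
      · exact h
      · exact absurd (hxy.trans h) (hcon x hx y hy)
    have hdle : t ≤ max (t / 2) m := by
      refine Metric.diam_le_of_forall_dist_le
        (le_max_of_le_left (by linarith)) ?_
      intro a ha b hb'
      rcases le_or_gt (t / 2) (dist a b) with h | h
      · refine le_max_of_le_right ?_
        have : dist a b ∈ hFfin.toFinset := by
          rw [Set.Finite.mem_toFinset]; exact ⟨h, a, ha, b, hb', rfl⟩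
        exact hFfin.toFinset.le_max' _ this
      · exact le_max_of_le_left h.le
    rcases max_cases (t / 2) m with ⟨he, -⟩ | ⟨he, -⟩ <;> rw [he] at hdle <;> linarith
  · have hdle : t ≤ t / 2 := by
      refine Metric.diam_le_of_forall_dist_le (by linarith) ?_
      intro a ha b hb'
      by_contra h
      push_neg at h
      exact hF ⟨dist a b, h.le, a, ha, b, hb', rfl⟩
    linarith

/-- In a totally bounded ultrametric space, every open ball with positive diameter equals the
closed ball of radius its diameter around any of its points. -/
lemma ball_aux_eq_closedBall (hu : ∀ x y z : X, dist x y ≤ max (dist x z) (dist z y))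
    (htb : TotallyBounded (Set.univ : Set X)) {c : X} {s : ℝ}
    (hd : 0 < Metric.diam (ball c s)) {x : X} (hx : x ∈ ball c s) :
    ball c s = closedBall x (Metric.diam (ball c s)) := by
  set t := Metric.diam (ball c s) with ht
  have hts : t < s := by
    obtain ⟨p, hp, q, hq, hpq⟩ := ball_aux_diam_attained hu htb isBounded_ball hd
    rw [ht, ← hpq]
    calc dist p q ≤ max (dist p c) (dist c q) := hu p q c
      _ < s := max_lt (mem_ball.mp hp) (by rw [dist_comm]; exact mem_ball.mp hq)
  ext z
  simp only [mem_ball, mem_closedBall]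
  constructor
  · intro hz
    exact Metric.dist_le_diam_of_mem isBounded_ball (mem_ball.mpr hz) hx
  · intro hz
    calc dist z c ≤ max (dist z x) (dist x c) := hu z c x
      _ < s := max_lt (lt_of_le_of_lt hz hts) (mem_ball.mp hx)

end Aux

/-- The ballean (set of all open balls) of a totally bounded ultrametric space
is at most countable, and for every strictly positive value `r` of the
distance set, the set of open balls of diameter `r` is finite and nonempty. -/
theorem ballean_countable_and_slices_finite {X : Type*} [MetricSpace X]
    (hu : ∀ x y z : X, dist x y ≤ max (dist x z) (dist z y))
    (htb : TotallyBounded (Set.univ : Set X)) :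
    Set.Countable {B : Set X | ∃ (c : X) (r : ℝ), 0 < r ∧ B = Metric.ball c r} ∧
    ∀ r : ℝ, (∃ x y : X, dist x y = r) → 0 < r →
      Set.Finite {B : Set X |
          (∃ (c : X) (r' : ℝ), 0 < r' ∧ B = Metric.ball c r') ∧ Metric.diam B = r} ∧
      Set.Nonempty {B : Set X |
          (∃ (c : X) (r' : ℝ), 0 < r' ∧ B = Metric.ball c r') ∧ Metric.diam B = r} := by
  classical
  -- Finiteness of slices, for any positive r
  have hslice_fin : ∀ r : ℝ, 0 < r →
      Set.Finite {B : Set X |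
        (∃ (c : X) (r' : ℝ), 0 < r' ∧ B = Metric.ball c r') ∧ Metric.diam B = r} := by
    intro r hr
    obtain ⟨s, hsfin, hscov⟩ := (Metric.totallyBounded_iff.mp htb) r hr
    refine ((hsfin.image (fun c => Metric.closedBall c r))).subset ?_
    rintro B ⟨⟨c, r', hr', rfl⟩, hdiam⟩
    have hd : 0 < Metric.diam (Metric.ball c r') := hdiam ▸ hr
    have hc : c ∈ Metric.ball c r' := Metric.mem_ball_self hr'
    obtain ⟨ci, hci, hcic⟩ : ∃ ci ∈ s, c ∈ Metric.ball ci r := by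
      simpa using hscov (Set.mem_univ c)
    -- ci belongs to the ball, since the ball is `closedBall c r`
    have hB : Metric.ball c r' = Metric.closedBall c r := by
      have := ball_aux_eq_closedBall hu htb hd hc
      rwa [hdiam] at this
    have hciB : ci ∈ Metric.ball c r' := by
      rw [hB, Metric.mem_closedBall, dist_comm]
      exact (Metric.mem_ball.mp hcic).le
    have hB' : Metric.ball c r' = Metric.closedBall ci r := by
      have := ball_aux_eq_closedBall hu htb hd hciB
      rwa [hdiam] at this
    exact ⟨ci, hci, hB'.symm⟩
  -- Nonemptiness of slices for realized positive r
  have hslice_ne : ∀ r : ℝ, (∃ x y : X, dist x y = r) → 0 < r →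
      Set.Nonempty {B : Set X |
        (∃ (c : X) (r' : ℝ), 0 < r' ∧ B = Metric.ball c r') ∧ Metric.diam B = r} := by
    rintro r ⟨a, b, hab⟩ hr
    obtain ⟨r', hrr', hr'min⟩ : ∃ r', r < r' ∧
        ∀ t : ℝ, (∃ x y : X, dist x y = t) → t < r' → t ≤ r := by
      set F := {t : ℝ | r < t ∧ ∃ x y : X, dist x y = t} with hF
      have hFfin : F.Finite := (ball_aux_fin hu htb hr).subset (by
        rintro t ⟨h1, h2⟩; exact ⟨h1.le, h2⟩)
      by_cases hne : F.Nonempty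
      · have hne' : hFfin.toFinset.Nonempty := by rwa [Set.Finite.toFinset_nonempty]
        refine ⟨hFfin.toFinset.min' hne', ?_, ?_⟩
        · have := hFfin.toFinset.min'_mem hne'
          rw [Set.Finite.mem_toFinset] at this
          exact this.1
        · intro t ht hlt
          by_contra hcon
          push_neg at hcon
          have : t ∈ hFfin.toFinset := by
            rw [Set.Finite.mem_toFinset]; exact ⟨hcon, ht⟩
          exact absurd hlt (not_lt.mpr (hFfin.toFinset.min'_le _ this))
      · refine ⟨r + 1, by linarith, ?_⟩
        intro t ht _
        by_contra hcon
        push_neg at hcon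
        exact hne ⟨t, hcon, ht⟩
    have hball : Metric.ball a r' = Metric.closedBall a r := by
      ext z
      simp only [Metric.mem_ball, Metric.mem_closedBall]
      constructor
      · intro hz
        exact hr'min _ ⟨z, a, rfl⟩ hz
      · intro hz
        exact lt_of_le_of_lt hz hrr'
    have hdiam : Metric.diam (Metric.closedBall a r) = r := by
      refine le_antisymm ?_ ?_
      · refine Metric.diam_le_of_forall_dist_le hr.le ?_
        intro x hx y hy
        calc dist x y ≤ max (dist x a) (dist a y) := hu x y a
          _ ≤ r := max_le (Metric.mem_closedBall.mp hx)
              (by rw [dist_comm]; exact Metric.mem_closedBall.mp hy)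
      · rw [← hab]
        refine Metric.dist_le_diam_of_mem Metric.isBounded_closedBall ?_ ?_
        · exact Metric.mem_closedBall_self dist_nonneg
        · rw [Metric.mem_closedBall, dist_comm, hab]
    exact ⟨Metric.closedBall a r, ⟨a, r', lt_trans hr hrr', hball.symm⟩, hdiam⟩
  refine ⟨?_, fun r hrd hr => ⟨hslice_fin r hr, hslice_ne r hrd hr⟩⟩
  -- Countability of the ballean
  -- choose finite covers at scales 1/(n+1)
  have hcov : ∀ n : ℕ, ∃ s : Set X, s.Finite ∧
      (Set.univ : Set X) ⊆ ⋃ c ∈ s, Metric.ball c (1 / (n + 1)) := by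
    intro n
    exact (Metric.totallyBounded_iff.mp htb) _ (by positivity)
  choose sn hsnfin hsncov using hcov
  set T : Set X := ⋃ n : ℕ, sn n with hT
  have hTc : T.Countable := Set.countable_iUnion fun n => (hsnfin n).countable
  -- positive realized distances form a countable set
  set Dpos : Set ℝ := {t : ℝ | 0 < t ∧ ∃ x y : X, dist x y = t} with hDpos
  have hDc : Dpos.Countable := by
    have hsub : Dpos ⊆ ⋃ n : ℕ, {t : ℝ | 1 / (n + 1) ≤ t ∧ ∃ x y : X, dist x y = t} := by
      rintro t ⟨ht, hxy⟩
      obtain ⟨n, hn⟩ := exists_nat_one_div_lt ht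
      exact Set.mem_iUnion.mpr ⟨n, hn.le, hxy⟩
    exact Set.Countable.mono hsub
      (Set.countable_iUnion fun n => (ball_aux_fin hu htb (by positivity)).countable)
  -- decompose the ballean
  refine Set.Countable.mono ?_
    ((hTc.image (fun c => ({c} : Set X))).union
      (hDc.biUnion (fun t ht => (hslice_fin t ht.1).countable)))
  rintro B ⟨c, r, hr, rfl⟩
  rcases eq_or_lt_of_le (Metric.diam_nonneg (s := Metric.ball c r)) with hd0 | hdpos
  · -- the ball is a singleton of an "isolated" point, which must lie in `T`
    left
    have hsing : Metric.ball c r = {c} := by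
      apply Set.Subset.antisymm
      · intro x hx
        have h1 := Metric.dist_le_diam_of_mem Metric.isBounded_ball hx (Metric.mem_ball_self hr)
        rw [← hd0] at h1
        exact Set.mem_singleton_iff.mpr (dist_le_zero.mp h1)
      · intro x hx
        rw [Set.mem_singleton_iff] at hx
        subst hx
        exact Metric.mem_ball_self hr
    obtain ⟨n, hn⟩ := exists_nat_one_div_lt hr
    obtain ⟨c', hc', hcc'⟩ : ∃ c'' ∈ sn n, c ∈ Metric.ball c'' (1 / (n + 1)) := by
      simpa using hsncov n (Set.mem_univ c)
    have hc'B : c' ∈ Metric.ball c r := by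
      rw [Metric.mem_ball, dist_comm]
      exact lt_trans (Metric.mem_ball.mp hcc') hn
    rw [hsing, Set.mem_singleton_iff] at hc'B
    subst hc'B
    exact ⟨c', Set.mem_iUnion.mpr ⟨n, hc'⟩, hsing.symm⟩
  · right
    obtain ⟨x, hx, y, hy, hxy⟩ := ball_aux_diam_attained hu htb Metric.isBounded_ball hdpos
    refine Set.mem_biUnion (show Metric.diam (Metric.ball c r) ∈ Dpos from ⟨hdpos, x, y, hxy⟩) ?_
    exact ⟨⟨c, r, hr, rfl⟩, rfl⟩
end

section
/- Let (X,d) be a totally bounded ultrametric space. Then there exist a compact ultrametric space (Y,ρ) and an isometric embedding Φ : X → Y such that the set of isolated points of Y is dense in Y. -/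
open Metric

namespace UltraEmbedAux

universe u

set_option linter.unusedSectionVars false

variable {C : Type u} [MetricSpace C]

noncomputable def ht : C ⊕ ULift.{u} ℕ → ℝ
  | .inl _ => 0
  | .inr n => (1/2 : ℝ) ^ n.down

def pr (f : ℕ → C) : C ⊕ ULift.{u} ℕ → C
  | .inl x => x
  | .inr n => f n.down

open scoped Classical in
noncomputable def D (f : ℕ → C) (a b : C ⊕ ULift.{u} ℕ) : ℝ :=
  if a = b then 0 else max (dist (pr f a) (pr f b)) (max (ht a) (ht b))

lemma ht_nonneg (a : C ⊕ ULift.{u} ℕ) : 0 ≤ ht a := by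
  cases a with
  | inl x => simp [ht]
  | inr n => simp only [ht]; positivity

lemma D_self (f : ℕ → C) (a : C ⊕ ULift.{u} ℕ) : D f a a = 0 := by simp [D]

lemma D_nonneg (f : ℕ → C) (a b : C ⊕ ULift.{u} ℕ) : 0 ≤ D f a b := by
  unfold D; split_ifs with h
  · rfl
  · exact le_max_of_le_left dist_nonneg

lemma D_comm (f : ℕ → C) (a b : C ⊕ ULift.{u} ℕ) : D f a b = D f b a := by
  unfold D
  rcases eq_or_ne a b with rfl | h
  · simp
  · rw [if_neg h, if_neg h.symm, dist_comm, max_comm (ht a)]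

lemma pr_dist_le (f : ℕ → C) (a b : C ⊕ ULift.{u} ℕ) :
    dist (pr f a) (pr f b) ≤ D f a b := by
  unfold D; split_ifs with h
  · subst h; simp
  · exact le_max_left _ _

lemma ht_left_le (f : ℕ → C) {a b : C ⊕ ULift.{u} ℕ} (h : a ≠ b) : ht a ≤ D f a b := by
  unfold D; rw [if_neg h]; exact le_max_of_le_right (le_max_left _ _)

lemma ht_right_le (f : ℕ → C) {a b : C ⊕ ULift.{u} ℕ} (h : a ≠ b) : ht b ≤ D f a b := by
  unfold D; rw [if_neg h]; exact le_max_of_le_right (le_max_right _ _)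

lemma D_pos (f : ℕ → C) {a b : C ⊕ ULift.{u} ℕ} (h : a ≠ b) : 0 < D f a b := by
  cases a with
  | inl x =>
    cases b with
    | inl y =>
      have hxy : x ≠ y := fun e => h (by rw [e])
      calc (0:ℝ) < dist x y := dist_pos.mpr hxy
        _ = dist (pr f (Sum.inl x)) (pr f (Sum.inl y)) := rfl
        _ ≤ _ := pr_dist_le f _ _
    | inr n =>
      calc (0:ℝ) < (1/2:ℝ) ^ n.down := by positivity
        _ = ht (Sum.inr n : C ⊕ ULift.{u} ℕ) := rfl
        _ ≤ _ := ht_right_le f h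
  | inr n =>
    calc (0:ℝ) < (1/2:ℝ) ^ n.down := by positivity
      _ = ht (Sum.inr n : C ⊕ ULift.{u} ℕ) := rfl
      _ ≤ _ := ht_left_le f h

lemma D_ultra (f : ℕ → C) (hC : ∀ x y z : C, dist x y ≤ max (dist x z) (dist z y))
    (a b c : C ⊕ ULift.{u} ℕ) : D f a b ≤ max (D f a c) (D f c b) := by
  rcases eq_or_ne a b with rfl | hab
  · rw [D_self]; exact le_max_of_le_left (D_nonneg f _ _)
  rcases eq_or_ne c a with rfl | hca
  · exact le_max_right _ _
  rcases eq_or_ne c b with rfl | hcb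
  · exact le_max_left _ _
  unfold D
  rw [if_neg hab, if_neg (Ne.symm hca), if_neg hcb]
  apply max_le
  · calc dist (pr f a) (pr f b) ≤ max (dist (pr f a) (pr f c)) (dist (pr f c) (pr f b)) :=
        hC _ _ _
      _ ≤ _ := max_le_max (le_max_left _ _) (le_max_left _ _)
  · apply max_le
    · exact le_max_of_le_left (le_max_of_le_right (le_max_left _ _))
    · exact le_max_of_le_right (le_max_of_le_right (le_max_right _ _))

lemma D_triangle (f : ℕ → C) (hC : ∀ x y z : C, dist x y ≤ max (dist x z) (dist z y))
    (a b c : C ⊕ ULift.{u} ℕ) : D f a b ≤ D f a c + D f c b :=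
  (D_ultra f hC a b c).trans (max_le_add_of_nonneg (D_nonneg f _ _) (D_nonneg f _ _))

noncomputable def mY (f : ℕ → C) (hC : ∀ x y z : C, dist x y ≤ max (dist x z) (dist z y)) :
    MetricSpace (C ⊕ ULift.{u} ℕ) where
  dist := D f
  dist_self := D_self f
  dist_comm := D_comm f
  dist_triangle x y z := D_triangle f hC x z y
  eq_of_dist_eq_zero h := by
    by_contra hab
    exact absurd h (ne_of_gt (D_pos f hab))

lemma D_inl_inl (f : ℕ → C) (x y : C) :
    D f (Sum.inl x) (Sum.inl y) = dist x y := by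
  unfold D
  split_ifs with h
  · simp [Sum.inl.injEq] at h; simp [h]
  · have : x ≠ y := fun e => h (by rw [e])
    show max (dist x y) (max 0 0) = dist x y
    rw [max_self, max_eq_left dist_nonneg]

structure YT (C : Type u) : Type u where
  val : C ⊕ ULift.{u} ℕ

lemma YT.val_injective {C : Type u} : Function.Injective (YT.val (C := C)) := by
  intro a b h
  cases a; cases b; cases h; rfl

end UltraEmbedAux

universe u

/-- Every totally bounded ultrametric space admits an isometric embedding into
a compact ultrametric space whose set of isolated points is dense. -/
theorem embeds_in_compact_with_dense_isolated_points {X : Type u}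
    [MetricSpace X]
    (hu : ∀ x y z : X, dist x y ≤ max (dist x z) (dist z y))
    (htb : TotallyBounded (Set.univ : Set X)) :
    ∃ (Y : Type u) (_ : MetricSpace Y),
      CompactSpace Y ∧
      (∀ x y z : Y, dist x y ≤ max (dist x z) (dist z y)) ∧
      (∃ Φ : X → Y, ∀ a b : X, dist (Φ a) (Φ b) = dist a b) ∧
      Dense {p : Y | IsOpen ({p} : Set Y)} := by
  classical
  open UltraEmbedAux in
  rcases isEmpty_or_nonempty X with hX | hX
  · refine ⟨PUnit, inferInstance, inferInstance, ?_, ⟨fun x => isEmptyElim x,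
      fun a => isEmptyElim a⟩, ?_⟩
    · intro x y z
      have : x = y := Subsingleton.elim x y
      subst this
      simp
    · have : {p : PUnit.{u+1} | IsOpen ({p} : Set PUnit)} = Set.univ := by
        apply Set.eq_univ_of_forall
        intro p
        have : ({p} : Set PUnit) = Set.univ := Set.eq_univ_of_forall fun q => by
          simp [Subsingleton.elim q p]
        simp only [Set.mem_setOf_eq, this]
        exact isOpen_univ
      rw [this]
      exact dense_univ
  · set C := UniformSpace.Completion X with hCdef
    haveI : Nonempty C := ⟨((Classical.arbitrary X : X) : C)⟩
    -- C is compact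
    haveI hCcompact : CompactSpace C := by
      rw [← isCompact_univ_iff, isCompact_iff_totallyBounded_isComplete]
      refine ⟨?_, completeSpace_iff_isComplete_univ.mp inferInstance⟩
      have h1 : TotallyBounded (Set.range ((↑) : X → C)) := by
        have := htb.image (UniformSpace.Completion.uniformContinuous_coe X)
        simpa [Set.image_univ] using this
      have h2 := h1.closure
      rwa [DenseRange.closure_range (UniformSpace.Completion.denseRange_coe (α := X))] at h2
    -- C is ultrametric
    have hCu : ∀ x y z : C, dist x y ≤ max (dist x z) (dist z y) := by
      intro x y z
      refine UniformSpace.Completion.induction_on₃ x y z ?_ ?_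
      · apply isClosed_le
        · exact continuous_fst.dist continuous_snd.fst
        · exact Continuous.max (continuous_fst.dist continuous_snd.snd)
            (continuous_snd.snd.dist continuous_snd.fst)
      · intro a b c
        rw [UniformSpace.Completion.dist_eq, UniformSpace.Completion.dist_eq,
          UniformSpace.Completion.dist_eq]
        exact hu a b c
    haveI : TopologicalSpace.SeparableSpace C := by
      rw [← TopologicalSpace.isSeparable_univ_iff]
      exact isCompact_univ.isSeparable
    set f : ℕ → C := fun n => TopologicalSpace.denseSeq C n.unpair.1 with hfdef
    have key : ∀ (x : C) (ε : ℝ), 0 < ε → ∃ n : ℕ, dist (f n) x < ε ∧ (1/2:ℝ)^n < ε := by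
      intro x ε hε
      obtain ⟨k, hk⟩ := (TopologicalSpace.denseRange_denseSeq C).exists_dist_lt x hε
      obtain ⟨m, hm⟩ := exists_pow_lt_of_lt_one hε (by norm_num : (1/2:ℝ) < 1)
      refine ⟨Nat.pair k m, ?_, ?_⟩
      · have h : f (Nat.pair k m) = TopologicalSpace.denseSeq C k := by
          simp [hfdef, Nat.unpair_pair]
        rw [h, dist_comm]
        exact hk
      · have h1 : (1/2:ℝ)^(Nat.pair k m) ≤ (1/2:ℝ)^m :=
          pow_le_pow_of_le_one (by norm_num) (by norm_num) (Nat.right_le_pair k m)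
        exact h1.trans_lt hm
    letI iY : MetricSpace (YT C) := MetricSpace.induced YT.val YT.val_injective (mY f hCu)
    have hdistD : ∀ a b : YT C, dist a b = D f a.val b.val := fun _ _ => rfl
    have hiso : ∀ n : ULift.{u} ℕ, IsOpen ({⟨Sum.inr n⟩} : Set (YT C)) := by
      intro n
      rw [Metric.isOpen_singleton_iff]
      refine ⟨(1/2:ℝ)^n.down, by positivity, fun y hy => ?_⟩
      by_contra hne
      have hnev : y.val ≠ Sum.inr n := fun e => hne (YT.val_injective e)
      have h1 : ht (Sum.inr n : C ⊕ ULift.{u} ℕ) ≤ D f y.val (Sum.inr n) := ht_right_le f hnev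
      rw [hdistD] at hy
      exact absurd (h1.trans_lt hy) (lt_irrefl _)
    have hdense : Dense {p : YT C | IsOpen ({p} : Set (YT C))} := by
      rw [Metric.dense_iff]
      intro p r hr
      obtain ⟨x | n⟩ := p
      · obtain ⟨n, h1, h2⟩ := key x r hr
        refine ⟨⟨Sum.inr ⟨n⟩⟩, ?_, hiso ⟨n⟩⟩
        have hne : (Sum.inr ⟨n⟩ : C ⊕ ULift.{u} ℕ) ≠ Sum.inl x := by simp
        rw [Metric.mem_ball, hdistD]
        unfold D
        rw [if_neg hne]
        exact max_lt h1 (max_lt h2 hr)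
      · exact ⟨⟨Sum.inr n⟩, Metric.mem_ball_self hr, hiso n⟩
    haveI : CompleteSpace (YT C) := by
      apply Metric.complete_of_cauchySeq_tendsto
      intro v hcs
      by_cases hconst : ∃ N, ∀ l ≥ N, v l = v N
      · obtain ⟨N, hN⟩ := hconst
        exact ⟨v N, tendsto_atTop_of_eventually_const hN⟩
      · have hlim : Filter.Tendsto (fun k => ht (v k).val) Filter.atTop (nhds 0) := by
          rw [Metric.tendsto_atTop]
          intro ε hε
          obtain ⟨N, hN⟩ := Metric.cauchySeq_iff.mp hcs ε hε
          refine ⟨N, fun k hk => ?_⟩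
          rw [Real.dist_eq, sub_zero, abs_of_nonneg (ht_nonneg _)]
          by_contra hge
          push_neg at hge
          apply hconst
          have hall : ∀ l, l ≥ N → v l = v k := by
            intro l hl
            by_contra hne
            have hnev : (v l).val ≠ (v k).val := fun e => hne (YT.val_injective e)
            have h1 : ht (v k).val ≤ D f (v l).val (v k).val := ht_right_le f hnev
            have h2 : dist (v l) (v k) < ε := hN l hl k hk
            rw [hdistD] at h2
            linarith
          exact ⟨N, fun l hl => (hall l hl).trans (hall N le_rfl).symm⟩
        have hvc : CauchySeq (fun k => pr f (v k).val) := by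
          rw [Metric.cauchySeq_iff] at hcs ⊢
          intro ε hε
          obtain ⟨N, hN⟩ := hcs ε hε
          refine ⟨N, fun m hm n hn => ?_⟩
          have h1 := pr_dist_le f (v m).val (v n).val
          have h2 : dist (v m) (v n) < ε := hN m hm n hn
          rw [hdistD] at h2
          linarith
        obtain ⟨c, hc⟩ := cauchySeq_tendsto_of_complete hvc
        refine ⟨⟨Sum.inl c⟩, ?_⟩
        rw [tendsto_iff_dist_tendsto_zero]
        apply squeeze_zero (g := fun k => max (dist (pr f (v k).val) c) (ht (v k).val))
          (fun k => dist_nonneg) ?_ ?_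
        · intro k
          rw [hdistD]
          unfold D
          split_ifs with h
          · exact le_max_of_le_left dist_nonneg
          · show max (dist (pr f (v k).val) c) (max (ht (v k).val) 0) ≤ _
            exact max_le (le_max_left _ _)
              (max_le (le_max_right _ _) (le_max_of_le_right (ht_nonneg _)))
        · have h0 : Filter.Tendsto (fun k => dist (pr f (v k).val) c) Filter.atTop (nhds 0) :=
            tendsto_iff_dist_tendsto_zero.mp hc
          have := h0.max hlim
          simpa using this
    haveI : CompactSpace (YT C) := by
      rw [← isCompact_univ_iff, isCompact_iff_totallyBounded_isComplete]
      refine ⟨?_, completeSpace_iff_isComplete_univ.mp inferInstance⟩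
      rw [Metric.totallyBounded_iff]
      intro ε hε
      obtain ⟨F, hF, hcov⟩ := Metric.totallyBounded_iff.mp (isCompact_univ : IsCompact (Set.univ : Set C)).totallyBounded ε hε
      obtain ⟨M, hM⟩ := exists_pow_lt_of_lt_one hε (by norm_num : (1/2:ℝ) < 1)
      refine ⟨(fun c : C => (⟨Sum.inl c⟩ : YT C)) '' F ∪
          (fun n : ℕ => (⟨Sum.inr ⟨n⟩⟩ : YT C)) '' Set.Iic M,
        (hF.image _).union ((Set.finite_Iic M).image _), ?_⟩
      rintro y -
      obtain ⟨x | n⟩ := y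
      · obtain ⟨c, hcF, hxc⟩ := Set.mem_iUnion₂.mp (hcov (Set.mem_univ x))
        refine Set.mem_iUnion₂.mpr ⟨⟨Sum.inl c⟩, Or.inl ⟨c, hcF, rfl⟩, ?_⟩
        rw [Metric.mem_ball, hdistD]
        rw [D_inl_inl]
        exact hxc
      · by_cases hn : n.down ≤ M
        · refine Set.mem_iUnion₂.mpr ⟨⟨Sum.inr n⟩, Or.inr ⟨n.down, hn, by cases n; rfl⟩, ?_⟩
          rw [Metric.mem_ball, hdistD, D_self]
          exact hε
        · push_neg at hn
          obtain ⟨c, hcF, hfc⟩ := Set.mem_iUnion₂.mp (hcov (Set.mem_univ (f n.down)))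
          refine Set.mem_iUnion₂.mpr ⟨⟨Sum.inl c⟩, Or.inl ⟨c, hcF, rfl⟩, ?_⟩
          rw [Metric.mem_ball, hdistD]
          unfold D
          rw [if_neg (by simp)]
          refine max_lt ?_ (max_lt ?_ hε)
          · exact hfc
          · calc (1/2:ℝ)^n.down ≤ (1/2:ℝ)^M :=
                pow_le_pow_of_le_one (by norm_num) (by norm_num) hn.le
              _ < ε := hM
    refine ⟨YT C, iY, inferInstance, ?_, ⟨fun a => ⟨Sum.inl ((a : X) : C)⟩, ?_⟩, hdense⟩
    · intro x y z
      rw [hdistD, hdistD, hdistD]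
      exact D_ultra f hCu x.val y.val z.val
    · intro a b
      rw [hdistD, D_inl_inl]
      exact UniformSpace.Completion.dist_eq a b
end

section
/- Let ℚ₂ be the field of 2-adic numbers with its 2-adic metric d₂(x,y) = |x−y|₂, let a ∈ ℚ₂ and r > 0, and let B = {x ∈ ℚ₂ : |x−a|₂ < r} be the corresponding open ball. Then B is topologically universal for the class of separable ultrametric spaces: for every separable metric space X whose metric is an ultrametric, there exists a topological embedding f : X → ℚ₂ (a homeomorphism of X onto its image) whose range is contained in B. -/
open Topology Metric Filter

noncomputable def cantorToQ2 (b : ℕ → Bool) : ℚ_[2] :=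
  ∑' n, if b n then (2:ℚ_[2])^n else 0

lemma norm_two_pow (n : ℕ) : ‖(2:ℚ_[2])^n‖ = (1/2:ℝ)^n := by
  rw [norm_pow]
  have : ‖(2:ℚ_[2])‖ = (1/2:ℝ) := by
    have := @Padic.norm_p 2 ⟨by norm_num⟩
    push_cast at this ⊢
    rw [this]; norm_num
  rw [this]

lemma term_norm_le (b : ℕ → Bool) (n : ℕ) :
    ‖if b n then (2:ℚ_[2])^n else 0‖ ≤ (1/2:ℝ)^n := by
  split
  · exact (norm_two_pow n).le
  · simp [pow_nonneg]

lemma term_summable (b : ℕ → Bool) :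
    Summable (fun n => if b n then (2:ℚ_[2])^n else 0) :=
  Summable.of_norm_bounded (summable_geometric_of_lt_one (by norm_num) (by norm_num))
    (term_norm_le b)

lemma cantorToQ2_norm_le (b : ℕ → Bool) : ‖cantorToQ2 b‖ ≤ 1 := by
  refine IsUltrametricDist.norm_tsum_le_of_forall_le_of_nonneg one_pos.le fun n => ?_
  refine (term_norm_le b n).trans ?_
  exact pow_le_one₀ (by norm_num) (by norm_num)

lemma cantorToQ2_injective : Function.Injective cantorToQ2 := by
  intro b b' h
  by_contra hne
  have hex : ∃ n, b n ≠ b' n := by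
    by_contra h'
    push_neg at h'
    exact hne (funext h')
  classical
  set n := Nat.find hex with hn
  have hbn : b n ≠ b' n := Nat.find_spec hex
  set c : ℕ → ℚ_[2] := fun m =>
    (if b m then (2:ℚ_[2])^m else 0) - (if b' m then (2:ℚ_[2])^m else 0) with hc
  have hcs : Summable c := (term_summable b).sub (term_summable b')
  have hsum : ∑' m, c m = 0 := by
    rw [hc, Summable.tsum_sub (term_summable b) (term_summable b')]
    have h' := h
    simp only [cantorToQ2] at h'
    rw [h', sub_self]
  have hcn : ‖c n‖ = (1/2:ℝ)^n := by
    rcases Bool.eq_false_or_eq_true (b n) with hb | hb <;>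
      rcases Bool.eq_false_or_eq_true (b' n) with hb' | hb' <;>
      simp only [hc, hb, hb', Bool.false_eq_true, if_true, if_false, sub_zero, zero_sub,
        norm_neg, sub_self] at hbn ⊢ <;>
      first
        | exact absurd rfl hbn
        | exact norm_two_pow n
  have hrest : ‖∑' m, if m = n then 0 else c m‖ ≤ (1/2:ℝ)^(n+1) := by
    refine IsUltrametricDist.norm_tsum_le_of_forall_le_of_nonneg (by positivity) fun m => ?_
    rcases eq_or_ne m n with rfl | hm
    · simp [pow_nonneg]
    rw [if_neg hm]
    rcases lt_or_gt_of_ne hm with hlt | hgt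
    · have : b m = b' m := by
        by_contra hbm
        exact absurd (Nat.find_le hbm) (not_le.mpr hlt)
      simp [hc, this, pow_nonneg]
    · have : ‖c m‖ ≤ (1/2:ℝ)^m := by
        refine le_trans ?_ (max_le (term_norm_le b m) (term_norm_le b' m))
        show ‖(if b m then (2:ℚ_[2])^m else 0) - (if b' m then (2:ℚ_[2])^m else 0)‖ ≤ _
        rw [sub_eq_add_neg]
        exact le_trans (IsUltrametricDist.norm_add_le_max _ _) (by rw [norm_neg])
      refine this.trans ?_
      exact pow_le_pow_of_le_one (by norm_num) (by norm_num) hgt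
  have heq : c n = -(∑' m, if m = n then 0 else c m) := by
    have := Summable.tsum_eq_add_tsum_ite hcs n
    rw [hsum] at this
    exact eq_neg_of_add_eq_zero_left this.symm
  have : ‖c n‖ ≤ (1/2:ℝ)^(n+1) := by
    rw [heq, norm_neg]; exact hrest
  rw [hcn] at this
  have h2 : ((1:ℝ)/2)^(n+1) < (1/2)^n := by
    apply pow_lt_pow_right_of_lt_one₀ <;> norm_num
  exact absurd this (not_le.mpr h2)

lemma cantorToQ2_continuous : Continuous cantorToQ2 := by
  refine continuous_tsum (fun n => ?_)
    (summable_geometric_of_lt_one (by norm_num) (by norm_num)) (fun n b => term_norm_le b n)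
  exact (continuous_of_discreteTopology (f := fun v : Bool => if v then (2:ℚ_[2])^n else 0)).comp
    (continuous_apply n)

/-- Every open ball of the field `ℚ₂` of 2-adic numbers is topologically
universal for the class of separable ultrametric spaces: every separable
ultrametric space topologically embeds into it. -/
theorem padic_ball_topologically_universal (a : ℚ_[2]) (r : ℝ) (hr : 0 < r) :
    ∀ (X : Type) [MetricSpace X], TopologicalSpace.SeparableSpace X →
      (∀ x y z : X, dist x y ≤ max (dist x z) (dist z y)) →
      ∃ f : X → ℚ_[2], Topology.IsEmbedding f ∧ Set.range f ⊆ Metric.ball a r := by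
  intro X _ hsep hultra
  haveI : IsUltrametricDist X := ⟨fun x y z => hultra x z y⟩
  -- choose k with (1/2)^k < r
  obtain ⟨k, hk⟩ : ∃ k : ℕ, ((1:ℝ)/2)^k < r := exists_pow_lt_of_lt_one hr (by norm_num)
  -- the Cantor-side embedding
  set f0 : (ℕ → Bool) → ℚ_[2] := fun b => a + (2:ℚ_[2])^k * cantorToQ2 b with hf0
  have hf0cont : Continuous f0 :=
    continuous_const.add (continuous_const.mul cantorToQ2_continuous)
  have hf0inj : Function.Injective f0 := by
    intro b b' h
    apply cantorToQ2_injective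
    have h2 : (2:ℚ_[2])^k ≠ 0 := pow_ne_zero _ (by norm_num)
    simp only [hf0] at h
    exact mul_left_cancel₀ h2 (add_right_injective a h)
  have hf0emb : Topology.IsEmbedding f0 :=
    (hf0cont.isClosedEmbedding hf0inj).isEmbedding
  have hf0range : Set.range f0 ⊆ Metric.ball a r := by
    rintro _ ⟨b, rfl⟩
    rw [Metric.mem_ball, dist_eq_norm]
    have h1 : f0 b - a = (2:ℚ_[2])^k * cantorToQ2 b := by rw [hf0]; ring
    rw [h1, norm_mul, norm_two_pow]
    calc ((1:ℝ)/2)^k * ‖cantorToQ2 b‖ ≤ ((1:ℝ)/2)^k * 1 := by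
          exact mul_le_mul_of_nonneg_left (cantorToQ2_norm_le b) (by positivity)
      _ < r := by rw [mul_one]; exact hk
  rcases isEmpty_or_nonempty X with hX | hX
  · refine ⟨fun x => isEmptyElim x, Topology.IsEmbedding.of_subsingleton _, ?_⟩
    simp [Set.range_eq_empty]
  -- nonempty case
  set u : ℕ → X := TopologicalSpace.denseSeq X with hu'
  have hu : DenseRange u := TopologicalSpace.denseRange_denseSeq X
  set e : ℕ ≃ ℕ × ℚ := (Denumerable.eqv (ℕ × ℚ)).symm with he
  set S : ℕ → Set X := fun n => Metric.ball (u (e n).1) ((e n).2 : ℝ) with hS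
  set F : X → ℕ → Bool := fun x n => (S n).boolIndicator x with hF
  have key : ∀ x : X, ∀ ε : ℝ, 0 < ε → ∃ n, x ∈ S n ∧ S n ⊆ Metric.ball x ε := by
    intro x ε hε
    obtain ⟨m, hm⟩ := Metric.denseRange_iff.mp hu x (ε/2) (by positivity)
    obtain ⟨q, hq1, hq2⟩ := exists_rat_btwn (show dist x (u m) < ε by linarith)
    refine ⟨e.symm (m, q), ?_, ?_⟩
    · simp only [hS, Equiv.apply_symm_apply, Metric.mem_ball]
      exact hq1
    · intro y hy
      simp only [hS, Equiv.apply_symm_apply, Metric.mem_ball] at hy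
      rw [Metric.mem_ball, dist_comm]
      calc dist x y ≤ max (dist x (u m)) (dist (u m) y) := hultra x y (u m)
        _ < (q : ℝ) := max_lt hq1 (by rwa [dist_comm] at hy)
        _ < ε := hq2
  have hclopen : ∀ n, IsClopen (S n) := fun n => IsUltrametricDist.isClopen_ball _ _
  have hFcont : Continuous F :=
    continuous_pi fun n => (continuous_boolIndicator_iff_isClopen _).mpr (hclopen n)
  have hFind : Topology.IsInducing F := by
    rw [Topology.isInducing_iff_nhds]
    intro x
    refine le_antisymm (hFcont.tendsto x).le_comap ?_
    rw [(Metric.nhds_basis_ball (x := x)).ge_iff]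
    intro ε hε
    obtain ⟨n, hxn, hsub⟩ := key x ε hε
    refine Filter.mem_comap.mpr ⟨{g : ℕ → Bool | g n = true}, ?_, ?_⟩
    · refine IsOpen.mem_nhds ?_ ?_
      · have : Continuous (fun g : ℕ → Bool => g n) := continuous_apply n
        exact this.isOpen_preimage ({true} : Set Bool) (isOpen_discrete _)
      · exact ((S n).mem_iff_boolIndicator x).mp hxn
    · intro y hy
      exact hsub (((S n).mem_iff_boolIndicator y).mpr hy)
  have hFemb : Topology.IsEmbedding F := ⟨hFind, hFind.injective⟩
  exact ⟨f0 ∘ F, hf0emb.comp hFemb,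
    (Set.range_comp_subset_range F f0).trans hf0range⟩
end
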